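/- arXiv:2510.23193 — 3 statements merged into one kernel-verified Lean document; each statement's English description precedes it below -/
import Mathlib

section
/- Let L be an even unimodular lattice, S ⊆ L a primitive sublattice with orthogonal complement K = S^⊥, and φ: S → S an isometry whose induced action on the discriminant group A_S is ±id. Then φ extends to an isometry φ̃ of L with φ̃|_K = ±id_K (with matching sign). -/
section Defs

variable {V : Type*} [AddCommGroup V] [Module ℚ V]

/-- The dual lattice `S∨ = {v ∈ S ⊗ ℚ | B(v, S) ⊆ ℤ}` of a lattice `S`, inside the
`ℚ`-span of `S`. -/
def dualLat (B : V →ₗ[ℚ] V →ₗ[ℚ] ℚ) (L : Submodule ℤ V) : Submodule ℤ V where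
  carrier := {v | v ∈ Submodule.span ℚ (L : Set V) ∧ ∀ w ∈ L, ∃ n : ℤ, B v w = (n : ℚ)}
  add_mem' := by
    rintro a b ⟨ha, ha'⟩ ⟨hb, hb'⟩
    refine ⟨Submodule.add_mem _ ha hb, fun w hw => ?_⟩
    obtain ⟨n, hn⟩ := ha' w hw
    obtain ⟨m, hm⟩ := hb' w hw
    exact ⟨n + m, by push_cast [map_add, LinearMap.add_apply, hn, hm]; ring⟩
  zero_mem' := ⟨Submodule.zero_mem _, fun w hw => ⟨0, by simp⟩⟩
  smul_mem' := by
    rintro c a ⟨ha, ha'⟩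
    constructor
    · rw [← Int.cast_smul_eq_zsmul ℚ]
      exact Submodule.smul_mem _ _ ha
    · intro w hw
      obtain ⟨n, hn⟩ := ha' w hw
      refine ⟨c * n, ?_⟩
      rw [← Int.cast_smul_eq_zsmul ℚ, map_smul, LinearMap.smul_apply, smul_eq_mul, hn]
      push_cast
      ring

/-- The orthogonal complement in `L` of a sublattice `S`. -/
def orthoIn (B : V →ₗ[ℚ] V →ₗ[ℚ] ℚ) (L S : Submodule ℤ V) : Submodule ℤ V where
  carrier := {v | v ∈ L ∧ ∀ s ∈ S, B v s = 0}
  add_mem' := by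
    rintro a b ⟨ha, ha'⟩ ⟨hb, hb'⟩
    exact ⟨Submodule.add_mem _ ha hb,
      fun s hs => by simp [map_add, LinearMap.add_apply, ha' s hs, hb' s hs]⟩
  zero_mem' := ⟨Submodule.zero_mem _, fun s hs => by simp⟩
  smul_mem' := by
    rintro c a ⟨ha, ha'⟩
    refine ⟨Submodule.smul_mem _ _ ha, fun s hs => ?_⟩
    rw [← Int.cast_smul_eq_zsmul ℚ, map_smul, LinearMap.smul_apply, smul_eq_mul,
      ha' s hs, mul_zero]

end Defs

/-!
Replacing `ψ` by `ε ψ` reduces to `ε = 1`. Let `W = ℚS` and `N = W^⊥`. For `x` in the radical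
`W ∩ N` every `q x` lies in `S∨`, so `q (ψ x - x) ∈ L` for all `q ∈ ℚ` and `ψ` fixes `x`. If `W`
were nondegenerate, `Φ = ψ ⊕ id` on `W ⊕ N` would do: the `W`-component of a vector of `L` lies
in `S∨`, which `ψ - 1` maps into `S`. In general choose `d_j ∈ L` forming a basis of `L` modulo
`W + N` and put `Φ d_j = d_j + E_j` with corrections `E_j ∈ S`. Unimodularity yields `E_j` with
the pairings against `W + N` forced by `Φ`, up to vectors of `S ∩ N` whose pairings with the `d_i`
are arbitrary integers; the last condition `B(Φ d_i, Φ d_j) = B(d_i, d_j)` is then solvable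
because the defect matrix is symmetric with even diagonal, `L` being even. An isometry mapping
the unimodular lattice `L` into itself maps it onto itself.
-/

open Submodule

section LinearAlgebra

variable {K V : Type*} [DivisionRing K] [AddCommGroup V] [Module K V]

theorem exists_isProj_mapsTo (W N : Submodule K V) :
    ∃ Q : V →ₗ[K] V, LinearMap.IsProj W Q ∧ ∀ n ∈ N, Q n ∈ N := by
  obtain ⟨N₀, hdisj, hsup⟩ :=
    IsModularLattice.exists_disjoint_and_sup_eq (inf_le_right : W ⊓ N ≤ N)
  have hN₀N : N₀ ≤ N := hsup ▸ le_sup_right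
  have hN₀W : Disjoint N₀ W := disjoint_iff_inf_le.mpr fun x hx =>
    hdisj.le_bot (⟨⟨hx.2, hN₀N hx.1⟩, hx.1⟩ : x ∈ W ⊓ N ⊓ N₀)
  obtain ⟨U, hN₀U, hU⟩ := hN₀W.exists_isCompl
  refine ⟨W.projection U hU.symm,
    ⟨projection_apply_mem _, fun w hw => projection_apply_of_mem_left _ hw⟩, fun n hn => ?_⟩
  rw [← hsup] at hn
  obtain ⟨r, hr, n₀, hn₀, rfl⟩ := mem_sup.1 hn
  rw [map_add, projection_apply_of_mem_left _ hr.1,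
    projection_apply_of_mem_right _ (hN₀U hn₀), add_zero]
  exact hr.2

theorem sup_span_range_eq_top {X : Submodule K V} {ι : Type*} [Fintype ι] {d : ι → V}
    {c : ι → Module.Dual K V} (hcomp : ∀ v, v - ∑ j, c j v • d j ∈ X) :
    X ⊔ span K (Set.range d) = ⊤ :=
  eq_top_iff.2 fun v _ => mem_sup.2 ⟨_, hcomp v, _,
    sum_mem fun j _ => smul_mem _ _ (subset_span ⟨j, rfl⟩), sub_add_cancel _ _⟩

end LinearAlgebra

theorem exists_add_transpose_eq {ι : Type*} [LinearOrder ι] (g : ι → ι → ℤ)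
    (hg : ∀ i j, g i j = g j i) (heven : ∀ i, Even (g i i)) :
    ∃ a : ι → ι → ℤ, ∀ i j, a i j + a j i = g i j := by
  refine ⟨fun i j => if i < j then g i j else if i = j then g i i / 2 else 0, fun i j => ?_⟩
  rcases lt_trichotomy i j with h | rfl | h
  · simp [h, h.ne', not_lt_of_gt h]
  · obtain ⟨k, hk⟩ := heven i
    simp only [lt_irrefl, if_false, if_true]
    omega
  · simp [h, h.ne', not_lt_of_gt h, hg i j]

section BilinearForm

variable {K V : Type*} [CommRing K] [AddCommGroup V] [Module K V] {B : LinearMap.BilinForm K V}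

theorem apply_apply_eq_of_mem_span {f : V →ₗ[K] V} {s : Set V}
    (hf : ∀ x ∈ s, ∀ y ∈ s, B (f x) (f y) = B x y) {x y : V} (hx : x ∈ span K s)
    (hy : y ∈ span K s) : B (f x) (f y) = B x y := by
  have hs : ∀ x ∈ s, ∀ y ∈ span K s, B (f x) (f y) = B x y := fun x hx =>
    LinearMap.eqOn_span' (f := (B (f x)).comp f) (g := B x) (hf x hx)
  exact LinearMap.eqOn_span' (f := (B.flip (f y)).comp f) (g := B.flip y)
    (fun x hx => hs x hx y hy) hx

theorem mem_orthogonal_span_iff {s : Set V} {x : V} :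
    x ∈ B.orthogonal (span K s) ↔ ∀ y ∈ s, B y x = 0 := by
  refine ⟨fun h y hy => h y (subset_span hy), fun h y hy => ?_⟩
  exact LinearMap.eqOn_span' (f := B.flip x) (g := 0) h hy

theorem injective_of_isometry (hnondeg : ∀ v, (∀ w, B v w = 0) → v = 0) {F : V →ₗ[K] V}
    (hF : ∀ v w, B (F v) (F w) = B v w) : Function.Injective F := by
  refine (injective_iff_map_eq_zero F).2 fun v hv => hnondeg v fun w => ?_
  rw [← hF, hv, map_zero, LinearMap.zero_apply]

theorem isometry_of_correction (hsymm : ∀ v w, B v w = B w v) {W N : Submodule K V}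
    (hWN : ∀ w ∈ W, ∀ n ∈ N, B w n = 0) {ψ : V →ₗ[K] V} (hψW : ∀ w ∈ W, ψ w ∈ W)
    (hψB : ∀ w ∈ W, ∀ w' ∈ W, B (ψ w) (ψ w') = B w w') {ι : Type*} {d E : ι → V}
    (hEW : ∀ j, ∀ w ∈ W, B (E j) (ψ w) = B (d j) w - B (d j) (ψ w))
    (hEN : ∀ j, ∀ n ∈ N, B (E j) n = 0)
    (hEd : ∀ i j, B (d i) (E j) + B (E i) (d j) + B (E i) (E j) = 0)
    (hspan : W ⊔ N ⊔ span K (Set.range d) = ⊤) {F : V →ₗ[K] V}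
    (hFW : ∀ w ∈ W, F w = ψ w) (hFN : ∀ n ∈ N, F n = n) (hFd : ∀ j, F (d j) = d j + E j) :
    ∀ v w, B (F v) (F w) = B v w := by
  have hWN' : ∀ w ∈ W, ∀ n ∈ N, B (F w) (F n) = B w n := fun w hw n hn => by
    rw [hFW w hw, hFN n hn, hWN _ (hψW w hw) n hn, hWN w hw n hn]
  have hWd : ∀ w ∈ W, ∀ j, B (F w) (F (d j)) = B w (d j) := fun w hw j => by
    rw [hFW w hw, hFd j, map_add, hsymm (ψ w) (d j), hsymm (ψ w) (E j), hEW j w hw, hsymm w]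
    ring
  have hNd : ∀ n ∈ N, ∀ j, B (F n) (F (d j)) = B n (d j) := fun n hn j => by
    rw [hFN n hn, hFd j, map_add, hsymm _ (E j), hEN j n hn, add_zero]
  have hdd : ∀ i j, B (F (d i)) (F (d j)) = B (d i) (d j) := fun i j => by
    rw [hFd i, hFd j]
    simp only [map_add, LinearMap.add_apply]
    linear_combination hEd i j
  have hsymm' : ∀ x z, B (F z) (F x) = B z x → B (F x) (F z) = B x z := fun x z h => by
    rw [hsymm, h, hsymm]
  replace hspan : span K ((W : Set V) ∪ N ∪ Set.range d) = ⊤ := by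
    rwa [span_union, span_union, span_eq, span_eq]
  suffices B.compl₁₂ F F = B from fun v w => congr($this v w)
  refine LinearMap.ext_on hspan fun x hx => LinearMap.ext_on hspan fun z hz => ?_
  simp only [LinearMap.compl₁₂_apply]
  rcases hx with (hx | hx) | ⟨i, rfl⟩ <;> rcases hz with (hz | hz) | ⟨j, rfl⟩
  · rw [hFW x hx, hFW z hz, hψB x hx z hz]
  · exact hWN' x hx z hz
  · exact hWd x hx j
  · exact hsymm' _ _ (hWN' z hz x hx)
  · rw [hFN x hx, hFN z hz]
  · exact hNd x hx j
  · exact hsymm' _ _ (hWd z hz i)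
  · exact hsymm' _ _ (hNd z hz i)
  · exact hdd i j

end BilinearForm

theorem mem_of_forall_orthogonal_eq_zero {K V : Type*} [Field K] [AddCommGroup V] [Module K V]
    [FiniteDimensional K V] {B : LinearMap.BilinForm K V} (hsymm : ∀ v w, B v w = B w v)
    (hnondeg : ∀ v, (∀ w, B v w = 0) → v = 0) {W : Submodule K V} {x : V}
    (hx : ∀ n ∈ B.orthogonal W, B x n = 0) : x ∈ W := by
  have hnd : B.Nondegenerate :=
    ⟨hnondeg, fun y h => hnondeg y fun x => by rw [hsymm]; exact h x⟩
  rw [← LinearMap.BilinForm.orthogonal_orthogonal hnd (fun x y h => by rw [hsymm]; exact h) W]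
  exact fun n hn => by rw [hsymm]; exact hx n hn

section Lattice

variable {V : Type*} [AddCommGroup V] [Module ℚ V] {B : LinearMap.BilinForm ℚ V}
  {L S : Submodule ℤ V}

theorem exists_zsmul_mem_of_mem_span {x : V} (hx : x ∈ span ℚ (S : Set V)) :
    ∃ n : ℤ, n ≠ 0 ∧ n • x ∈ S := by
  obtain ⟨y, hy, ⟨n, hn⟩, rfl⟩ := (IsLocalization.mem_span_iff (nonZeroDivisors ℤ) (S := ℚ)).1 hx
  have hn' : (n : ℚ) * IsLocalization.mk' ℚ (1 : ℤ) ⟨n, hn⟩ = 1 := by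
    simpa using IsLocalization.mk'_spec' ℚ (1 : ℤ) ⟨n, hn⟩
  refine ⟨n, nonZeroDivisors.ne_zero hn, ?_⟩
  rwa [← Int.cast_smul_eq_zsmul ℚ, smul_smul, hn', one_smul, ← span_eq S]

theorem mem_of_mem_span_of_primitive (hSprim : ∀ x ∈ L, ∀ n : ℤ, n ≠ 0 → n • x ∈ S → x ∈ S)
    {x : V} (hxL : x ∈ L) (hxS : x ∈ span ℚ (S : Set V)) : x ∈ S := by
  obtain ⟨n, hn, hnx⟩ := exists_zsmul_mem_of_mem_span hxS
  exact hSprim x hxL n hn hnx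

theorem eq_zero_of_forall_smul_mem (hnondeg : ∀ v, (∀ w, B v w = 0) → v = 0)
    (hfull : span ℚ (L : Set V) = ⊤) (hint : ∀ v ∈ L, ∀ w ∈ L, ∃ n : ℤ, B v w = (n : ℚ))
    {y : V} (hy : ∀ q : ℚ, q • y ∈ L) : y = 0 := by
  by_contra hy0
  obtain ⟨v, hvL, hv⟩ : ∃ v ∈ L, B y v ≠ 0 := by
    by_contra! h
    have hBy : B y = 0 := LinearMap.ext_on hfull h
    exact hy0 (hnondeg y fun w => by rw [hBy, LinearMap.zero_apply])
  obtain ⟨n, hn⟩ := hint _ (hy (2 * B y v)⁻¹) v hvL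
  rw [map_smul, LinearMap.smul_apply, smul_eq_mul] at hn
  have : (1 : ℚ) = 2 * n := by rw [← hn]; field_simp
  have : (1 : ℤ) = 2 * n := by exact_mod_cast this
  omega

theorem exists_mem_forall_apply_eq [FiniteDimensional ℚ V]
    (hnondeg : ∀ v, (∀ w, B v w = 0) → v = 0) (hfull : span ℚ (L : Set V) = ⊤)
    (hunimodular : dualLat B L ≤ L) (f : Module.Dual ℚ V)
    (hf : ∀ v ∈ L, ∃ n : ℤ, f v = n) : ∃ y ∈ L, ∀ v, B y v = f v := by
  have hinj : Function.Injective B :=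
    (injective_iff_map_eq_zero B).2 fun v hv => hnondeg v fun w => by rw [hv]; rfl
  obtain ⟨y, rfl⟩ := (LinearMap.injective_iff_surjective_of_finrank_eq_finrank
    Subspace.dual_finrank_eq.symm).1 hinj f
  exact ⟨y, hunimodular ⟨hfull ▸ mem_top, hf⟩, fun _ => rfl⟩

theorem map_eq_of_isometry (hfull : span ℚ (L : Set V) = ⊤)
    (hint : ∀ v ∈ L, ∀ w ∈ L, ∃ n : ℤ, B v w = (n : ℚ)) (hunimodular : dualLat B L ≤ L)
    {Φ : V ≃ₗ[ℚ] V} (hΦ : ∀ v w, B (Φ v) (Φ w) = B v w) (hΦL : ∀ v ∈ L, Φ v ∈ L) :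
    L.map (Φ.toLinearMap.restrictScalars ℤ) = L := by
  refine le_antisymm (map_le_iff_le_comap.2 hΦL) fun x hx => ⟨Φ.symm x, ?_, Φ.apply_symm_apply x⟩
  refine hunimodular ⟨hfull ▸ mem_top, fun w hw => ?_⟩
  rw [← hΦ, Φ.apply_symm_apply]
  exact hint x hx _ (hΦL w hw)

theorem exists_linearEquiv_of_isometry [FiniteDimensional ℚ V]
    (hnondeg : ∀ v, (∀ w, B v w = 0) → v = 0) (hfull : span ℚ (L : Set V) = ⊤)
    (hint : ∀ v ∈ L, ∀ w ∈ L, ∃ n : ℤ, B v w = (n : ℚ)) (hunimodular : dualLat B L ≤ L)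
    {F : V →ₗ[ℚ] V} (hF : ∀ v w, B (F v) (F w) = B v w) (hFL : ∀ v ∈ L, F v ∈ L) :
    ∃ Φ : V ≃ₗ[ℚ] V, ⇑Φ = F ∧ L.map (Φ.toLinearMap.restrictScalars ℤ) = L := by
  have hinj := injective_of_isometry hnondeg hF
  set Φ := LinearEquiv.ofBijective F ⟨hinj, LinearMap.injective_iff_surjective.1 hinj⟩
  exact ⟨Φ, rfl, map_eq_of_isometry hfull hint hunimodular hF hFL⟩

theorem exists_basis_modulo (hfg : L.FG) (hfull : span ℚ (L : Set V) = ⊤) (X : Submodule ℚ V) :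
    ∃ (r : ℕ) (d : Fin r → V) (c : Fin r → Module.Dual ℚ V), (∀ j, d j ∈ L) ∧
      (∀ i, ∀ x ∈ X, c i x = 0) ∧ (∀ i j, c i (d j) = if i = j then 1 else 0) ∧
      (∀ i, ∀ v ∈ L, ∃ n : ℤ, c i v = n) ∧ ∀ v, v - ∑ j, c j v • d j ∈ X := by
  set M : Submodule ℤ (V ⧸ X) := L.map (X.mkQ.restrictScalars ℤ)
  have : Module.Finite ℤ M := Module.Finite.iff_fg.2 (hfg.map _)
  have : IsAddTorsionFree (V ⧸ X) := .of_module_rat _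
  set b := Module.finBasis ℤ M
  have hli : LinearIndependent ℚ fun j => (b j : V ⧸ X) :=
    (LinearIndependent.iff_fractionRing ℤ ℚ).1 (b.linearIndependent.map' M.subtype M.ker_subtype)
  have hM : span ℤ (Set.range fun j => (b j : V ⧸ X)) = M := by
    change span ℤ (Set.range (M.subtype ∘ b)) = M
    rw [Set.range_comp, span_image, b.span_eq, Submodule.map_top, range_subtype]
  have hsp : ⊤ ≤ span ℚ (Set.range fun j => (b j : V ⧸ X)) := by
    rw [← span_span_of_tower ℤ, hM, show (M : Set (V ⧸ X)) = X.mkQ '' L from map_coe _ _,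
      span_image, hfull, Submodule.map_top, range_mkQ]
  set bQ := Module.Basis.mk hli hsp
  choose d hdL hd using fun j => (b j).2
  have hdb (j) : X.mkQ (d j) = bQ j := (hd j).trans (Module.Basis.mk_apply hli hsp j).symm
  refine ⟨_, d, fun i => bQ.coord i ∘ₗ X.mkQ, hdL, fun i x hx => ?_, fun i j => ?_,
    fun i v hv => ?_, fun v => ?_⟩
  · simp [(Submodule.Quotient.mk_eq_zero X).2 hx]
  · simp [hdb, Finsupp.single_apply, eq_comm]
  · set z := b.repr ⟨X.mkQ v, mem_map_of_mem hv⟩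
    have hz : X.mkQ v = ∑ j, (z j : ℚ) • bQ j := by
      have h := congrArg Subtype.val (b.sum_repr ⟨X.mkQ v, mem_map_of_mem hv⟩)
      simp only [coe_sum, coe_smul] at h
      rw [← h]
      exact Finset.sum_congr rfl fun j _ => by rw [Module.Basis.mk_apply, Int.cast_smul_eq_zsmul]
    exact ⟨z i, by simp [hz, Finsupp.single_apply]⟩
  · rw [← Submodule.Quotient.mk_eq_zero, ← X.mkQ_apply, map_sub, map_sum]
    simp only [map_smul, hdb, LinearMap.comp_apply, Module.Basis.coord_apply, bQ.sum_repr,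
      sub_self]

theorem exists_orthogonal_of_pairings [FiniteDimensional ℚ V] (hsymm : ∀ v w, B v w = B w v)
    (hnondeg : ∀ v, (∀ w, B v w = 0) → v = 0) (hfull : span ℚ (L : Set V) = ⊤)
    (hunimodular : dualLat B L ≤ L) {W : Submodule ℚ V} (hS : ∀ x, x ∈ S ↔ x ∈ L ∧ x ∈ W)
    {r : ℕ} {d : Fin r → V} {c : Fin r → Module.Dual ℚ V}
    (hcX : ∀ i, ∀ x ∈ W ⊔ B.orthogonal W, c i x = 0)
    (hcd : ∀ i j, c i (d j) = if i = j then 1 else 0) (hcL : ∀ i, ∀ v ∈ L, ∃ n : ℤ, c i v = n)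
    (a : Fin r → Fin r → ℤ) :
    ∃ ρ : Fin r → V, (∀ j, ρ j ∈ S) ∧ (∀ j, ∀ x ∈ W ⊔ B.orthogonal W, B (ρ j) x = 0) ∧
      ∀ i j, B (ρ j) (d i) = a i j := by
  choose ρ hρL hρ using fun j => exists_mem_forall_apply_eq hnondeg hfull hunimodular
    (∑ i, (a i j : ℚ) • c i) fun v hv => by
      choose n hn using fun i => hcL i v hv
      exact ⟨∑ i, a i j * n i, by simp [hn]⟩
  have hρX (j) (x) (hx : x ∈ W ⊔ B.orthogonal W) : B (ρ j) x = 0 := by simp [hρ, hcX _ x hx]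
  refine ⟨ρ, fun j => (hS _).2 ⟨hρL j, ?_⟩, hρX, fun i j => by simp [hρ, hcd]⟩
  exact mem_of_forall_orthogonal_eq_zero hsymm hnondeg fun n hn => hρX j n (mem_sup_right hn)

theorem exists_correction [FiniteDimensional ℚ V] (hsymm : ∀ v w, B v w = B w v)
    (hnondeg : ∀ v, (∀ w, B v w = 0) → v = 0) (hfull : span ℚ (L : Set V) = ⊤)
    (hint : ∀ v ∈ L, ∀ w ∈ L, ∃ n : ℤ, B v w = (n : ℚ))
    (heven : ∀ v ∈ L, ∃ n : ℤ, B v v = 2 * (n : ℚ)) (hunimodular : dualLat B L ≤ L)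
    {W : Submodule ℚ V} (hS : ∀ x, x ∈ S ↔ x ∈ L ∧ x ∈ W)
    {r : ℕ} {d : Fin r → V} {c : Fin r → Module.Dual ℚ V} (hdL : ∀ j, d j ∈ L)
    (hcX : ∀ i, ∀ x ∈ W ⊔ B.orthogonal W, c i x = 0)
    (hcd : ∀ i j, c i (d j) = if i = j then 1 else 0) (hcL : ∀ i, ∀ v ∈ L, ∃ n : ℤ, c i v = n)
    {T : V →ₗ[ℚ] V} (hTL : ∀ v ∈ L, T v ∈ S) (hTN : ∀ n ∈ B.orthogonal W, T n = 0) :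
    ∃ E : Fin r → V, (∀ j, E j ∈ S) ∧ (∀ j, ∀ x ∈ W ⊔ B.orthogonal W, B (E j) x = B (d j) (T x)) ∧
      ∀ i j, B (d i) (E j) + B (E i) (d j) + B (E i) (E j) = 0 := by
  have hSL (s) (hs : s ∈ S) : s ∈ L := ((hS s).1 hs).1
  have hmemS (x) (hx : x ∈ L) (hxN : ∀ n ∈ B.orthogonal W, B x n = 0) : x ∈ S :=
    (hS x).2 ⟨hx, mem_of_forall_orthogonal_eq_zero hsymm hnondeg hxN⟩
  choose y hyL hy using fun j => exists_mem_forall_apply_eq hnondeg hfull hunimodular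
    ((B (d j)).comp T) fun v hv => hint _ (hdL j) _ (hSL _ (hTL v hv))
  have hyS (j) : y j ∈ S := hmemS _ (hyL j) fun n hn => by
    rw [hy, LinearMap.comp_apply, hTN n hn, map_zero]
  have hdefect (i j) : ∃ n : ℤ, B (d i + y i) (d j + y j) - B (d i) (d j) = n := by
    obtain ⟨m, hm⟩ := hint _ (add_mem (hdL i) (hyL i)) _ (add_mem (hdL j) (hyL j))
    obtain ⟨m', hm'⟩ := hint _ (hdL i) _ (hdL j)
    exact ⟨m - m', by rw [hm, hm']; push_cast; ring⟩
  choose g hg using hdefect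
  have hgsymm (i j) : -g i j = -g j i := by
    rw [neg_inj, ← Int.cast_inj (α := ℚ), ← hg, ← hg, hsymm (d i + y i), hsymm (d i)]
  have hgeven (i) : Even (-g i i) := by
    obtain ⟨m, hm⟩ := heven _ (add_mem (hdL i) (hyL i))
    obtain ⟨m', hm'⟩ := heven _ (hdL i)
    refine ⟨m' - m, ?_⟩
    have : (g i i : ℚ) = 2 * m - 2 * m' := by rw [← hg, hm, hm']
    have : g i i = 2 * m - 2 * m' := by exact_mod_cast this
    omega
  -- Adding `ρ j ⊥ W ⊔ W^⊥` keeps the pairings of `y j` with `W ⊔ W^⊥` and shifts `g` by `a + aᵀ`.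
  obtain ⟨a, ha⟩ := exists_add_transpose_eq _ hgsymm hgeven
  obtain ⟨ρ, hρS, hρX, hρd⟩ :=
    exists_orthogonal_of_pairings hsymm hnondeg hfull hunimodular hS hcX hcd hcL a
  have hSX (s) (hs : s ∈ S) : s ∈ W ⊔ B.orthogonal W := mem_sup_left ((hS s).1 hs).2
  refine ⟨fun j => y j + ρ j, fun j => add_mem (hyS j) (hρS j), fun j x hx => ?_, fun i j => ?_⟩
  · rw [map_add, LinearMap.add_apply, hy, hρX j x hx, add_zero, LinearMap.comp_apply]
  · have hgij := hg i j
    have haij : ((a i j + a j i : ℤ) : ℚ) = -g i j := by rw [ha]; push_cast; rfl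
    simp only [map_add, LinearMap.add_apply] at hgij ⊢
    rw [hsymm (d i) (ρ j), hsymm (y i) (ρ j), hρd, hρd, hρX _ _ (hSX _ (hyS j)),
      hρX _ _ (hSX _ (hyS i)), hρX _ _ (hSX _ (hρS j))]
    push_cast at haij
    linear_combination hgij + haij

end Lattice

section DiscriminantForm

variable {V : Type*} [AddCommGroup V] [Module ℚ V] {B : LinearMap.BilinForm ℚ V}
  {L S : Submodule ℤ V}

theorem apply_eq_self_of_mem_radical (hsymm : ∀ v w, B v w = B w v)
    (hnondeg : ∀ v, (∀ w, B v w = 0) → v = 0) (hfull : span ℚ (L : Set V) = ⊤)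
    (hint : ∀ v ∈ L, ∀ w ∈ L, ∃ n : ℤ, B v w = (n : ℚ)) (hSL : S ≤ L) {ψ : V →ₗ[ℚ] V}
    (hdisc : ∀ x ∈ dualLat B S, ψ x - x ∈ S) {x : V}
    (hx : x ∈ span ℚ (S : Set V) ⊓ B.orthogonal (span ℚ (S : Set V))) : ψ x = x := by
  refine sub_eq_zero.1 (eq_zero_of_forall_smul_mem hnondeg hfull hint fun q => hSL ?_)
  have hqx : q • x ∈ dualLat B S := ⟨smul_mem _ q hx.1, fun s hs =>
    ⟨0, by rw [map_smul, LinearMap.smul_apply, hsymm, hx.2 s (subset_span hs), smul_zero,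
      Int.cast_zero]⟩⟩
  simpa [smul_sub] using hdisc _ hqx

theorem exists_projection_mem_dualLat (hsymm : ∀ v w, B v w = B w v)
    (hint : ∀ v ∈ L, ∀ w ∈ L, ∃ n : ℤ, B v w = (n : ℚ)) (hSL : S ≤ L) {r : ℕ} {d : Fin r → V}
    {c : Fin r → Module.Dual ℚ V} (hdL : ∀ j, d j ∈ L)
    (hcX : ∀ i, ∀ x ∈ span ℚ (S : Set V) ⊔ B.orthogonal (span ℚ (S : Set V)), c i x = 0)
    (hcd : ∀ i j, c i (d j) = if i = j then 1 else 0) (hcL : ∀ i, ∀ v ∈ L, ∃ n : ℤ, c i v = n)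
    (hcomp : ∀ v, v - ∑ j, c j v • d j ∈ span ℚ (S : Set V) ⊔ B.orthogonal (span ℚ (S : Set V))) :
    ∃ P : V →ₗ[ℚ] V, (∀ w ∈ span ℚ (S : Set V), P w = w) ∧
      (∀ n ∈ B.orthogonal (span ℚ (S : Set V)),
        P n ∈ span ℚ (S : Set V) ⊓ B.orthogonal (span ℚ (S : Set V))) ∧
      (∀ j, P (d j) = 0) ∧ ∀ v ∈ L, P v ∈ dualLat B S := by
  set W := span ℚ (S : Set V)
  set N := B.orthogonal W
  obtain ⟨Q, hQ, hQN⟩ := exists_isProj_mapsTo W N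
  set P := Q ∘ₗ (LinearMap.id - ∑ j, (c j).smulRight (d j))
  have hP (v) : P v = Q (v - ∑ j, c j v • d j) := by simp [P]
  have hPX (x) (hx : x ∈ W ⊔ N) : P x = Q x := by simp [hP, hcX _ x hx]
  refine ⟨P, fun w hw => by rw [hPX w (mem_sup_left hw), hQ.map_id w hw],
    fun n hn => by rw [hPX n (mem_sup_right hn)]; exact ⟨hQ.map_mem n, hQN n hn⟩,
    fun j => by simp [hP, hcd], fun v hv => ⟨by rw [hP]; exact hQ.map_mem _, fun s hs => ?_⟩⟩
  obtain ⟨w, hw, n, hn, hwn⟩ := mem_sup.1 (hcomp v)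
  have hmL : w + n ∈ L := by
    refine hwn ▸ sub_mem hv (sum_mem fun j _ => ?_)
    obtain ⟨k, hk⟩ := hcL j v hv
    rw [hk, Int.cast_smul_eq_zsmul]
    exact zsmul_mem (hdL j) k
  obtain ⟨k, hk⟩ := hint _ hmL s (hSL hs)
  refine ⟨k, ?_⟩
  rw [hP, ← hwn, ← hk, map_add, hQ.map_id w hw, hsymm, hsymm (w + n), map_add, map_add,
    hQN n hn s (subset_span hs), hn s (subset_span hs)]

theorem exists_isometry_extension_of_disc_eq_id [FiniteDimensional ℚ V]
    (hsymm : ∀ v w, B v w = B w v) (hnondeg : ∀ v, (∀ w, B v w = 0) → v = 0) (hfg : L.FG)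
    (hfull : span ℚ (L : Set V) = ⊤) (hint : ∀ v ∈ L, ∀ w ∈ L, ∃ n : ℤ, B v w = (n : ℚ))
    (heven : ∀ v ∈ L, ∃ n : ℤ, B v v = 2 * (n : ℚ)) (hunimodular : dualLat B L ≤ L)
    (hSL : S ≤ L) (hSprim : ∀ x ∈ L, ∀ n : ℤ, n ≠ 0 → n • x ∈ S → x ∈ S) {ψ : V ≃ₗ[ℚ] V}
    (hψS : ∀ s ∈ S, ψ s ∈ S) (hψS' : ∀ s ∈ S, ψ.symm s ∈ S)
    (hψB : ∀ x ∈ S, ∀ y ∈ S, B (ψ x) (ψ y) = B x y)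
    (hdisc : ∀ x ∈ dualLat B S, ψ x - x ∈ S) :
    ∃ Φ : V ≃ₗ[ℚ] V, (∀ v w, B (Φ v) (Φ w) = B v w) ∧
      L.map (Φ.toLinearMap.restrictScalars ℤ) = L ∧ (∀ s ∈ S, Φ s = ψ s) ∧
      ∀ x ∈ B.orthogonal (span ℚ (S : Set V)), Φ x = x := by
  set W := span ℚ (S : Set V)
  set N := B.orthogonal W
  have hS (x) : x ∈ S ↔ x ∈ L ∧ x ∈ W :=
    ⟨fun h => ⟨hSL h, subset_span h⟩, fun h => mem_of_mem_span_of_primitive hSprim h.1 h.2⟩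
  have hψW (w) (hw : w ∈ W) : ψ w ∈ W :=
    (span_le.2 fun s hs => subset_span (hψS s hs) : W ≤ W.comap ψ.toLinearMap) hw
  have hfix (x) (hx : x ∈ W ⊓ N) : ψ x = x :=
    apply_eq_self_of_mem_radical hsymm hnondeg hfull hint hSL hdisc hx
  obtain ⟨r, d, c, hdL, hcX, hcd, hcL, hcomp⟩ := exists_basis_modulo hfg hfull (W ⊔ N)
  obtain ⟨P, hPW, hPN, hPd, hPL⟩ :=
    exists_projection_mem_dualLat hsymm hint hSL hdL hcX hcd hcL hcomp
  -- `ψ⁻¹ - 1 = -ψ⁻¹ ∘ (ψ - 1)` and `P L ⊆ S∨`, so `T L ⊆ S`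
  set T := (ψ.symm.toLinearMap - LinearMap.id) ∘ₗ P
  have hTL (v) (hv : v ∈ L) : T v ∈ S := by
    have h := neg_mem (hψS' _ (hdisc _ (hPL v hv)))
    simpa [T] using h
  have hTN (n) (hn : n ∈ N) : T n = 0 := by
    have h := hfix _ (hPN n hn)
    simp [T, ψ.symm_apply_eq.2 h.symm]
  obtain ⟨E, hES, hEX, hEd⟩ := exists_correction hsymm hnondeg hfull hint heven hunimodular hS
    hdL hcX hcd hcL hTL hTN
  set F := LinearMap.id + (ψ.toLinearMap - LinearMap.id) ∘ₗ P + ∑ j, (c j).smulRight (E j)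
  have hF (v) : F v = v + (ψ (P v) - P v) + ∑ j, c j v • E j := by simp [F]
  have hFW (w) (hw : w ∈ W) : F w = ψ w := by simp [hF, hPW w hw, hcX _ w (mem_sup_left hw)]
  have hFN (n) (hn : n ∈ N) : F n = n := by
    simp [hF, hfix _ (hPN n hn), hcX _ n (mem_sup_right hn)]
  have hFd (j) : F (d j) = d j + E j := by simp [hF, hPd, hcd]
  have hiso := isometry_of_correction (W := W) (N := N) (ψ := ψ.toLinearMap) hsymm
    (fun w hw n hn => hn w hw) hψW (fun w hw w' hw' => apply_apply_eq_of_mem_span hψB hw hw')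
    (fun j w hw => by
      simp only [LinearEquiv.coe_coe]
      rw [hEX j _ (mem_sup_left (hψW w hw))]
      simp [T, hPW _ (hψW w hw)])
    (fun j n hn => by rw [hEX j n (mem_sup_right hn), hTN n hn, map_zero]) hEd
    (sup_span_range_eq_top hcomp) hFW hFN hFd
  have hFL (v) (hv : v ∈ L) : F v ∈ L := by
    refine (hF v).symm ▸ add_mem (add_mem hv (hSL (hdisc _ (hPL v hv)))) (sum_mem fun j _ => ?_)
    obtain ⟨k, hk⟩ := hcL j v hv
    rw [hk, Int.cast_smul_eq_zsmul]
    exact zsmul_mem (hSL (hES j)) k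
  obtain ⟨Φ, hΦF, hΦL⟩ := exists_linearEquiv_of_isometry hnondeg hfull hint hunimodular hiso hFL
  refine ⟨Φ, ?_, hΦL, ?_, ?_⟩ <;> rw [hΦF]
  exacts [hiso, fun s hs => hFW s (subset_span hs), hFN]

end DiscriminantForm

/-- The isometry `φ` of `S` is encoded by a linear automorphism `ψ` of `V` with `ψ S = S`; that
`φ` acts on `A_S = S∨/S` as `ε • id` reads `ψ x - ε x ∈ S` for `x ∈ S∨`. -/
theorem stmt8 {V : Type*} [AddCommGroup V] [Module ℚ V] [FiniteDimensional ℚ V]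
    (B : V →ₗ[ℚ] V →ₗ[ℚ] ℚ)
    (hsymm : ∀ v w, B v w = B w v)
    (hnondeg : ∀ v, (∀ w, B v w = 0) → v = 0)
    (L : Submodule ℤ V) (hfg : L.FG)
    (hfull : Submodule.span ℚ (L : Set V) = ⊤)
    (hint : ∀ v ∈ L, ∀ w ∈ L, ∃ n : ℤ, B v w = (n : ℚ))
    (heven : ∀ v ∈ L, ∃ n : ℤ, B v v = 2 * (n : ℚ))
    (hunimodular : dualLat B L ≤ L)
    (S : Submodule ℤ V) (hSL : S ≤ L)
    (hSprim : ∀ x ∈ L, ∀ n : ℤ, n ≠ 0 → n • x ∈ S → x ∈ S)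
    (ψ : V ≃ₗ[ℚ] V)
    (hψS : Submodule.map (ψ.toLinearMap.restrictScalars ℤ) S = S)
    (hψB : ∀ x ∈ S, ∀ y ∈ S, B (ψ x) (ψ y) = B x y)
    (ε : ℤ) (hε : ε = 1 ∨ ε = -1)
    (hdisc : ∀ x ∈ dualLat B S, ψ x - (ε : ℚ) • x ∈ S) :
    ∃ Φ : V ≃ₗ[ℚ] V,
      (∀ v w, B (Φ v) (Φ w) = B v w) ∧
      Submodule.map (Φ.toLinearMap.restrictScalars ℤ) L = L ∧
      (∀ s ∈ S, Φ s = ψ s) ∧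
      (∀ x ∈ orthoIn B L S, Φ x = (ε : ℚ) • x) := by
  have hε2 : (ε : ℚ) * ε = 1 := by rcases hε with rfl | rfl <;> norm_num
  have hεinv : (ε : ℚ)⁻¹ = ε := inv_eq_of_mul_eq_one_right hε2
  set e := LinearEquiv.smulOfNeZero ℚ V ε (left_ne_zero_of_mul_eq_one hε2)
  have hεS {M : Submodule ℤ V} (x) (hx : x ∈ M) : (ε : ℚ) • x ∈ M := by
    rw [Int.cast_smul_eq_zsmul]; exact zsmul_mem hx ε
  have hψS₁ (s) (hs : s ∈ S) : ψ s ∈ S := hψS ▸ mem_map_of_mem hs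
  have hψS₂ (s) (hs : s ∈ S) : ψ.symm s ∈ S :=
    (map_equiv_eq_comap_symm (ψ.restrictScalars ℤ) S ▸ hψS).ge hs
  obtain ⟨Φ, hΦB, hΦL, hΦS, hΦK⟩ := exists_isometry_extension_of_disc_eq_id (ψ := ψ.trans e)
    hsymm hnondeg hfg hfull hint heven hunimodular hSL hSprim
    (fun s hs => hεS _ (hψS₁ s hs))
    (fun s hs => by simpa [e, Units.smul_def, hεinv] using hεS _ (hψS₂ s hs))
    (fun x hx y hy => by simp [e, ← mul_assoc, hε2, hψB x hx y hy])
    (fun x hx => by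
      convert hεS _ (hdisc x hx) using 1
      simp [e, smul_sub, smul_smul, hε2])
  have hΦe : ∀ v w, B ((Φ.trans e) v) ((Φ.trans e) w) = B v w := fun v w => by
    simp [e, ← mul_assoc, hε2, hΦB]
  refine ⟨Φ.trans e, hΦe, map_eq_of_isometry hfull hint hunimodular hΦe fun v hv => ?_,
    fun s hs => by simp [e, hΦS s hs, smul_smul, hε2], fun x hx => ?_⟩
  · simpa [e, Units.smul_def] using hεS _ (hΦL ▸ mem_map_of_mem hv : Φ v ∈ L)
  · have hxN : x ∈ LinearMap.BilinForm.orthogonal B (span ℚ (S : Set V)) :=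
      mem_orthogonal_span_iff.2 fun y hy => by rw [hsymm]; exact hx.2 y hy
    simp [e, hΦK x hxN]
end

section
/- Let Λ̃ be an even unimodular lattice of signature (4,4) (hence isometric to U^{⊕4}), let w ∈ Λ̃ be primitive with w² = 2k > 0, let m ≥ 1, and set v = mw. Then the orthogonal complement v^⊥ of v in Λ̃ is an even lattice of rank 7 and signature (3,4), isometric to U^{⊕3} ⊕ ⟨-2k⟩. -/
/-- The Gram matrix of `U^{⊕4}`, `U` the hyperbolic plane. -/
def gramU4 : Matrix (Fin 8) (Fin 8) ℚ :=
  !![0,1,0,0,0,0,0,0; 1,0,0,0,0,0,0,0;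
     0,0,0,1,0,0,0,0; 0,0,1,0,0,0,0,0;
     0,0,0,0,0,1,0,0; 0,0,0,0,1,0,0,0;
     0,0,0,0,0,0,0,1; 0,0,0,0,0,0,1,0]

/-- The Gram matrix of `U^{⊕3} ⊕ ⟨-2k⟩`. -/
def gramU3neg2k (k : ℤ) : Matrix (Fin 7) (Fin 7) ℚ :=
  !![0,1,0,0,0,0,0; 1,0,0,0,0,0,0;
     0,0,0,1,0,0,0; 0,0,1,0,0,0,0;
     0,0,0,0,0,1,0; 0,0,0,0,1,0,0;
     0,0,0,0,0,0,-(2*(k:ℚ))]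

/-!
Integral isometries of `U⁴ = ℤ⁸` move every vector to a multiple `g (e₁ + t f₁)` of a vector
of the first hyperbolic plane. Permutations of the hyperbolic planes and the Eichler
transvection `x₂ ↦ x₂ + t x₀, x₁ ↦ x₁ - t x₃` run a Euclidean algorithm on the coordinates,
decreasing `|x₀|` until `x₀` divides every coordinate; then the three other planes are cleared
by transvections. Transported to `L`, this gives a hyperbolic basis in which
`w = g (e₁ + t f₁)`. Primitivity forces `g = ±1` and `w² = 2k` forces `t = k`, so `L ∩ w^⊥` has
the basis `e₂, f₂, e₃, f₃, e₄, f₄, e₁ - k f₁` with Gram matrix `U³ ⊕ ⟨-2k⟩`; finally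
`v^⊥ = w^⊥` because `m ≠ 0`.
-/

open Matrix

theorem linearIndependent_of_biorthogonal {ι R M N : Type*} [Fintype ι] [DecidableEq ι]
    [CommRing R] [AddCommGroup M] [Module R M] [AddCommGroup N] [Module R N]
    (B : M →ₗ[R] N →ₗ[R] R) (c : ι → M) (d : ι → N)
    (h : ∀ i j, B (c i) (d j) = if i = j then 1 else 0) : LinearIndependent R c := by
  rw [Fintype.linearIndependent_iff]
  intro a ha i
  simpa [map_sum, h] using congrArg (fun x => B x (d i)) ha

theorem Matrix.sum_smul_sum_smul {ι R M : Type*} [Fintype ι] [CommSemiring R] [AddCommMonoid M]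
    [Module R M] (u : ι → M) (P : Matrix ι ι R) (x : ι → R) :
    ∑ j, x j • ∑ i, P i j • u i = ∑ i, (P *ᵥ x) i • u i := by
  simp only [Finset.smul_sum, smul_smul, mulVec, dotProduct, Finset.sum_smul]
  rw [Finset.sum_comm]
  simp_rw [mul_comm]

namespace U4

def gram : Matrix (Fin 8) (Fin 8) ℤ :=
  !![0,1,0,0,0,0,0,0; 1,0,0,0,0,0,0,0;
     0,0,0,1,0,0,0,0; 0,0,1,0,0,0,0,0;
     0,0,0,0,0,1,0,0; 0,0,0,0,1,0,0,0;
     0,0,0,0,0,0,0,1; 0,0,0,0,0,0,1,0]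

theorem cast_gram (i j : Fin 8) : (gram i j : ℚ) = gramU4 i j := by
  fin_cases i <;> fin_cases j <;> rfl

def IsIsometry (A : Matrix (Fin 8) (Fin 8) ℤ) : Prop := Aᵀ * gram * A = gram

namespace IsIsometry

variable {A A' : Matrix (Fin 8) (Fin 8) ℤ}

theorem mul (hA : IsIsometry A) (hA' : IsIsometry A') : IsIsometry (A * A') :=
  calc (A * A')ᵀ * gram * (A * A') = A'ᵀ * (Aᵀ * gram * A) * A' := by
        simp only [transpose_mul, Matrix.mul_assoc]
    _ = gram := by rw [hA, hA']

theorem exists_isIsometry_mul_eq_one (hA : IsIsometry A) : ∃ P, IsIsometry P ∧ P * A = 1 := by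
  have hgg : gram * gram = 1 := by decide
  have hPA : gram * Aᵀ * gram * A = 1 := by
    rw [Matrix.mul_assoc, Matrix.mul_assoc, ← Matrix.mul_assoc Aᵀ, hA, hgg]
  refine ⟨gram * Aᵀ * gram, ?_, hPA⟩
  have hAP : A * (gram * Aᵀ * gram) = 1 := mul_eq_one_comm.mp hPA
  calc (gram * Aᵀ * gram)ᵀ * gram * (gram * Aᵀ * gram)
      = gram * (A * (gram * Aᵀ * gram)) := by
        simp only [transpose_mul, transpose_transpose, (by decide : gramᵀ = gram),
          Matrix.mul_assoc, hgg, Matrix.mul_one]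
    _ = gram := by rw [hAP, Matrix.mul_one]

end IsIsometry

theorem isIsometry_permMatrix (σ : Equiv.Perm (Fin 8)) (hσ : gram.submatrix σ σ = gram) :
    IsIsometry (σ.permMatrix ℤ) := by
  rw [IsIsometry, transpose_permMatrix, PEquiv.toMatrix_toPEquiv_mul,
    PEquiv.mul_toMatrix_toPEquiv]
  ext i j
  simpa using (congrFun (congrFun hσ (σ.symm i)) (σ.symm j)).symm

theorem isIsometry_one_add_smul (N : Matrix (Fin 8) (Fin 8) ℤ) (hN : Nᵀ * gram + gram * N = 0)
    (hN' : Nᵀ * gram * N = 0) (t : ℤ) : IsIsometry (1 + t • N) :=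
  calc (1 + t • N)ᵀ * gram * (1 + t • N)
      = gram + t • (Nᵀ * gram + gram * N) + (t * t) • (Nᵀ * gram * N) := by
        simp only [transpose_add, transpose_one, transpose_smul, Matrix.add_mul, Matrix.mul_add,
          Matrix.one_mul, Matrix.mul_one, Matrix.smul_mul, Matrix.mul_smul, smul_add, smul_smul]
        abel
    _ = gram := by rw [hN, hN', smul_zero, smul_zero, add_zero, add_zero]

def Reaches (n n' : Fin 8 → ℤ) : Prop := ∃ A, IsIsometry A ∧ A *ᵥ n = n'

namespace Reaches

variable {n n' n'' : Fin 8 → ℤ}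

theorem trans (h : Reaches n n') (h' : Reaches n' n'') : Reaches n n'' := by
  obtain ⟨A, hA, rfl⟩ := h
  obtain ⟨A', hA', rfl⟩ := h'
  exact ⟨A' * A, hA'.mul hA, (mulVec_mulVec _ _ _).symm⟩

instance : Trans Reaches Reaches Reaches := ⟨trans⟩

theorem of_perm (σ : Equiv.Perm (Fin 8)) (hσ : gram.submatrix σ σ = gram)
    (h : ∀ i, n' i = n (σ i)) : Reaches n n' :=
  ⟨_, isIsometry_permMatrix σ hσ, by
    rw [PEquiv.toMatrix_toPEquiv_mulVec]
    exact funext fun i => (h i).symm⟩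

end Reaches

theorem reaches_eichler {p q r s a b c d q' r' : ℤ} (t : ℤ) (hq : q' = q - t * s)
    (hr : r' = r + t * p) : Reaches ![p, q, r, s, a, b, c, d] ![p, q', r', s, a, b, c, d] := by
  let N : Matrix (Fin 8) (Fin 8) ℤ := single 2 0 1 - single 1 3 1
  refine ⟨1 + t • N, isIsometry_one_add_smul N (by decide) (by decide) t, ?_⟩
  rw [add_mulVec, one_mulVec, smul_mulVec, hq, hr, sub_eq_add_neg q]
  ext i
  fin_cases i <;> simp [N, sub_mulVec, single_mulVec]

theorem reaches_emod (p q r s a b c d : ℤ) :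
    Reaches ![p, q, r, s, a, b, c, d] ![r % p, s, p, q + r / p * s, a, b, c, d] :=
  calc Reaches ![p, q, r, s, a, b, c, d] ![p, q + r / p * s, r % p, s, a, b, c, d] :=
        reaches_eichler (-(r / p)) (by ring) (by rw [Int.emod_def]; ring)
    Reaches _ ![r % p, s, p, q + r / p * s, a, b, c, d] :=
        .of_perm (Equiv.swap 0 2 * Equiv.swap 1 3) (by decide) fun i => by
          fin_cases i <;> simp [Equiv.swap_apply_of_ne_of_ne]

theorem exists_reaches_emod (n : Fin 8 → ℤ) {j : Fin 8} (hj : 2 ≤ j) :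
    ∃ n', Reaches n n' ∧ n' 0 = n j % n 0 := by
  obtain ⟨σ, hσ, hσ0, hσ2⟩ :
      ∃ σ : Equiv.Perm (Fin 8), gram.submatrix σ σ = gram ∧ σ 0 = 0 ∧ σ 2 = j := by
    fin_cases j
    · exact absurd hj (by decide)
    · exact absurd hj (by decide)
    · exact ⟨1, by decide, rfl, rfl⟩
    · exact ⟨Equiv.swap 2 3, by decide, rfl, rfl⟩
    · exact ⟨Equiv.swap 2 4 * Equiv.swap 3 5, by decide, rfl, rfl⟩
    · exact ⟨Equiv.swap 2 5 * Equiv.swap 3 4, by decide, rfl, rfl⟩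
    · exact ⟨Equiv.swap 2 6 * Equiv.swap 3 7, by decide, rfl, rfl⟩
    · exact ⟨Equiv.swap 2 7 * Equiv.swap 3 6, by decide, rfl, rfl⟩
  have hperm :
      Reaches n ![n (σ 0), n (σ 1), n (σ 2), n (σ 3), n (σ 4), n (σ 5), n (σ 6), n (σ 7)] :=
    .of_perm σ hσ fun i => by fin_cases i <;> rfl
  exact ⟨_, hperm.trans (reaches_emod ..), by simp [hσ0, hσ2]⟩

theorem reaches_clear_plane (p q r s a b c d : ℤ) :
    Reaches ![p, q, p * r, p * s, a, b, c, d] ![p, q + p * r * s, 0, 0, a, b, c, d] :=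
  calc Reaches ![p, q, p * r, p * s, a, b, c, d] ![p, q + p * r * s, 0, p * s, a, b, c, d] :=
        reaches_eichler (-r) (by ring) (by ring)
    Reaches _ ![p, q + p * r * s, p * s, 0, a, b, c, d] :=
        .of_perm (Equiv.swap 2 3) (by decide) fun i => by
          fin_cases i <;> simp [Equiv.swap_apply_of_ne_of_ne]
    Reaches _ ![p, q + p * r * s, 0, 0, a, b, c, d] :=
        reaches_eichler (-s) (by ring) (by ring)

theorem exists_reaches_clear (n : Fin 8 → ℤ) (hn : ∀ j, 2 ≤ j → n 0 ∣ n j) :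
    ∃ h, Reaches n ![n 0, h, 0, 0, 0, 0, 0, 0] := by
  obtain ⟨r, hr⟩ := hn 2 (by decide)
  obtain ⟨s, hs⟩ := hn 3 (by decide)
  obtain ⟨a, ha⟩ := hn 4 (by decide)
  obtain ⟨b, hb⟩ := hn 5 (by decide)
  obtain ⟨c, hc⟩ := hn 6 (by decide)
  obtain ⟨d, hd⟩ := hn 7 (by decide)
  have hn_eq : n = ![n 0, n 1, n 0 * r, n 0 * s, n 0 * a, n 0 * b, n 0 * c, n 0 * d] := by
    ext i
    fin_cases i <;> simp [hr, hs, ha, hb, hc, hd]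
  refine ⟨n 1 + n 0 * r * s + n 0 * a * b + n 0 * c * d, hn_eq ▸ ?_⟩
  generalize n 0 = p, n 1 = q
  calc Reaches ![p, q, p * r, p * s, p * a, p * b, p * c, p * d]
        ![p, q + p * r * s, 0, 0, p * a, p * b, p * c, p * d] := reaches_clear_plane ..
    Reaches _ ![p, q + p * r * s, p * a, p * b, 0, 0, p * c, p * d] :=
        .of_perm (Equiv.swap 2 4 * Equiv.swap 3 5) (by decide) fun i => by
          fin_cases i <;> simp [Equiv.swap_apply_of_ne_of_ne]
    Reaches _ ![p, q + p * r * s + p * a * b, 0, 0, 0, 0, p * c, p * d] := reaches_clear_plane ..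
    Reaches _ ![p, q + p * r * s + p * a * b, p * c, p * d, 0, 0, 0, 0] :=
        .of_perm (Equiv.swap 2 6 * Equiv.swap 3 7) (by decide) fun i => by
          fin_cases i <;> simp [Equiv.swap_apply_of_ne_of_ne]
    Reaches _ ![p, q + p * r * s + p * a * b + p * c * d, 0, 0, 0, 0, 0, 0] :=
        reaches_clear_plane ..

theorem reaches_multiple_or_emod (n : Fin 8 → ℤ) :
    (∃ g t, Reaches n ![g, g * t, 0, 0, 0, 0, 0, 0]) ∨
      ∃ n' x, Reaches n n' ∧ ¬ n 0 ∣ x ∧ n' 0 = x % n 0 := by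
  by_cases hn : ∀ j, 2 ≤ j → n 0 ∣ n j
  · obtain ⟨h, hh⟩ := exists_reaches_clear n hn
    by_cases hdvd : n 0 ∣ h
    · obtain ⟨t, rfl⟩ := hdvd
      exact Or.inl ⟨n 0, t, hh⟩
    have hcopy : Reaches ![n 0, h, 0, 0, 0, 0, 0, 0] ![n 0, h, h, 0, 0, 0, 0, 0] :=
      calc Reaches ![n 0, h, 0, 0, 0, 0, 0, 0] ![h, n 0, 0, 0, 0, 0, 0, 0] :=
            .of_perm (Equiv.swap 0 1) (by decide) fun i => by
              fin_cases i <;> simp [Equiv.swap_apply_of_ne_of_ne]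
        Reaches _ ![h, n 0, h, 0, 0, 0, 0, 0] := reaches_eichler 1 (by ring) (by ring)
        Reaches _ ![n 0, h, h, 0, 0, 0, 0, 0] :=
            .of_perm (Equiv.swap 0 1) (by decide) fun i => by
              fin_cases i <;> simp [Equiv.swap_apply_of_ne_of_ne]
    obtain ⟨n', hn', hn'0⟩ := exists_reaches_emod ![n 0, h, h, 0, 0, 0, 0, 0] (j := 2) le_rfl
    exact Or.inr ⟨n', h, hh.trans (hcopy.trans hn'), hdvd, hn'0⟩
  · push Not at hn
    obtain ⟨j, hj, hndvd⟩ := hn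
    obtain ⟨n', hn', hn'0⟩ := exists_reaches_emod n hj
    exact Or.inr ⟨n', n j, hn', hndvd, hn'0⟩

theorem exists_reaches_multiple_of_ne_zero (n : Fin 8 → ℤ) (hn : n 0 ≠ 0) :
    ∃ g t, Reaches n ![g, g * t, 0, 0, 0, 0, 0, 0] := by
  induction hN : (n 0).natAbs using Nat.strong_induction_on generalizing n with
  | _ N ih =>
    rcases reaches_multiple_or_emod n with h | ⟨n', x, hn', hx, hn'0⟩
    · exact h
    have hne : x % n 0 ≠ 0 := fun h => hx (Int.dvd_of_emod_eq_zero h)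
    have hlt : (x % n 0).natAbs < N := by
      rw [← hN, ← Int.ofNat_lt, Int.natCast_natAbs, Int.natCast_natAbs,
        abs_of_nonneg (Int.emod_nonneg x hn)]
      exact Int.emod_lt_abs x hn
    obtain ⟨g, t, h⟩ := ih _ (hn'0 ▸ hlt) n' (hn'0 ▸ hne) rfl
    exact ⟨g, t, hn'.trans h⟩

theorem exists_reaches_multiple (n : Fin 8 → ℤ) :
    ∃ g t, Reaches n ![g, g * t, 0, 0, 0, 0, 0, 0] := by
  by_cases hn : n 0 = 0
  · rcases reaches_multiple_or_emod n with h | ⟨n', x, hn', hx, hn'0⟩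
    · exact h
    rw [hn, Int.emod_zero] at hn'0
    rw [hn, zero_dvd_iff] at hx
    obtain ⟨g, t, h⟩ := exists_reaches_multiple_of_ne_zero n' (hn'0 ▸ hx)
    exact ⟨g, t, hn'.trans h⟩
  · exact exists_reaches_multiple_of_ne_zero n hn

variable {V : Type*} [AddCommGroup V] [Module ℚ V] {B : V →ₗ[ℚ] V →ₗ[ℚ] ℚ}

theorem apply_sum_smul_sum_smul {u : Fin 8 → V} (hu : ∀ i j, B (u i) (u j) = gramU4 i j)
    (x y : Fin 8 → ℤ) : B (∑ i, x i • u i) (∑ j, y j • u j) = ((x ⬝ᵥ gram *ᵥ y : ℤ) : ℚ) := by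
  simp only [map_sum, map_zsmul, LinearMap.coe_sum, LinearMap.coe_smul, zsmul_eq_mul,
    Finset.sum_apply, Pi.mul_apply, Pi.intCast_apply, hu, ← cast_gram, Finset.mul_sum, dotProduct,
    mulVec, Int.cast_sum, Int.cast_mul]
  rw [Finset.sum_comm]
  exact Finset.sum_congr rfl fun _ _ => Finset.sum_congr rfl fun _ _ => by ring

variable (B) (L : Submodule ℤ V) in
structure IsHyperbolicBasis (u : Fin 8 → V) : Prop where
  span_eq : Submodule.span ℤ (Set.range u) = L
  gram_eq : ∀ i j, B (u i) (u j) = gramU4 i j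

namespace IsHyperbolicBasis

variable {L : Submodule ℤ V} {u : Fin 8 → V}

theorem exists_of_reaches (hu : IsHyperbolicBasis B L u) {n n' : Fin 8 → ℤ} (h : Reaches n n') :
    ∃ u', IsHyperbolicBasis B L u' ∧ ∑ i, n' i • u' i = ∑ i, n i • u i := by
  obtain ⟨A, hA, rfl⟩ := h
  obtain ⟨P, hP, hPA⟩ := hA.exists_isIsometry_mul_eq_one
  have hcomb : ∀ x, ∑ j, x j • ∑ i, P i j • u i = ∑ i, (P *ᵥ x) i • u i :=
    sum_smul_sum_smul u P
  refine ⟨fun j => ∑ i, P i j • u i, ⟨le_antisymm ?_ ?_, fun j l => ?_⟩, ?_⟩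
  · rw [Submodule.span_le, ← hu.span_eq]
    rintro _ ⟨j, rfl⟩
    exact Submodule.sum_mem _ fun i _ => Submodule.smul_mem _ _ (Submodule.subset_span ⟨i, rfl⟩)
  · rw [← hu.span_eq, Submodule.span_le]
    rintro _ ⟨i, rfl⟩
    have hi : u i = ∑ j, (A *ᵥ Pi.single i 1) j • ∑ l, P l j • u l := by
      rw [hcomb, mulVec_mulVec, hPA, one_mulVec]
      simp only [Pi.single_apply, ite_smul, one_smul, zero_smul, Finset.sum_ite_eq',
        Finset.mem_univ, if_true]
    rw [hi]
    exact Submodule.sum_mem _ fun j _ => Submodule.smul_mem _ _ (Submodule.subset_span ⟨j, rfl⟩)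
  · have hPP : (fun i => P i j) ⬝ᵥ gram *ᵥ (fun i => P i l) = (Pᵀ * gram * P) j l := by
      rw [dotProduct_mulVec]
      rfl
    rw [apply_sum_smul_sum_smul hu.gram_eq, hPP, hP, cast_gram]
  · rw [hcomb, mulVec_mulVec, hPA, one_mulVec]

theorem neg (hu : IsHyperbolicBasis B L u) : IsHyperbolicBasis B L (-u) where
  span_eq := by rw [← Set.neg_range', Submodule.span_neg, hu.span_eq]
  gram_eq i j := by simpa using hu.gram_eq i j

theorem exists_eq_add_smul (hb : IsHyperbolicBasis B L u) {w : V} (hw : w ∈ L)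
    (hwprim : ∀ x ∈ L, ∀ n : ℤ, w = n • x → n = 1 ∨ n = -1) {k : ℤ} (hww : B w w = 2 * k) :
    ∃ u', IsHyperbolicBasis B L u' ∧ w = u' 0 + k • u' 1 := by
  obtain ⟨n, hn⟩ := (Submodule.mem_span_range_iff_exists_fun ℤ).mp (hb.span_eq ▸ hw)
  obtain ⟨g, t, hgt⟩ := exists_reaches_multiple n
  obtain ⟨u, hu, hsum⟩ := hb.exists_of_reaches hgt
  have hwu : w = g • (u 0 + t • u 1) := by
    rw [← hn, ← hsum, Fin.sum_univ_eight]
    simp [smul_add, mul_smul]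
  have hx : u 0 + t • u 1 ∈ L := hu.span_eq ▸ Submodule.add_mem _
    (Submodule.subset_span ⟨0, rfl⟩) (Submodule.smul_mem _ t (Submodule.subset_span ⟨1, rfl⟩))
  have hxx : B (u 0 + t • u 1) (u 0 + t • u 1) = 2 * t := by
    simp [hu.gram_eq, gramU4, two_mul]
  have hg := hwprim _ hx g hwu
  obtain rfl : t = k := by
    have : B w w = 2 * t := by
      rcases hg with rfl | rfl <;>
        simp only [hwu, one_smul, neg_smul, map_neg, LinearMap.neg_apply, neg_neg, hxx]
    exact_mod_cast (by linarith : (t : ℚ) = k)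
  rcases hg with rfl | rfl
  · exact ⟨u, hu, by simpa using hwu⟩
  · exact ⟨-u, hu.neg, by simp [hwu]⟩

end IsHyperbolicBasis

def complementBasis (u : Fin 8 → V) (k : ℤ) : Fin 7 → V :=
  ![u 2, u 3, u 4, u 5, u 6, u 7, u 0 - k • u 1]

variable {u : Fin 8 → V}

theorem gram_complementBasis (hu : ∀ i j, B (u i) (u j) = gramU4 i j) (k : ℤ) (i j : Fin 7) :
    B (complementBasis u k i) (complementBasis u k j) = gramU3neg2k k i j := by
  fin_cases i <;> fin_cases j <;>
    simp [complementBasis, hu, gramU4, gramU3neg2k, two_mul, sub_eq_add_neg]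

theorem linearIndependent_complementBasis (hu : ∀ i j, B (u i) (u j) = gramU4 i j) (k : ℤ) :
    LinearIndependent ℚ (complementBasis u k) := by
  refine linearIndependent_of_biorthogonal B _ ![u 3, u 2, u 5, u 4, u 7, u 6, u 1] fun i j => ?_
  fin_cases i <;> fin_cases j <;> simp [complementBasis, hu, gramU4]

theorem IsHyperbolicBasis.span_complementBasis {L : Submodule ℤ V} (hu : IsHyperbolicBasis B L u)
    (k : ℤ) : Submodule.span ℤ (Set.range (complementBasis u k)) =
      L ⊓ (LinearMap.ker (B.flip (u 0 + k • u 1))).restrictScalars ℤ := by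
  have hmem : ∀ j, u j ∈ L := fun j => hu.span_eq ▸ Submodule.subset_span ⟨j, rfl⟩
  apply le_antisymm
  · rw [Submodule.span_le]
    rintro _ ⟨i, rfl⟩
    refine ⟨?_, ?_⟩
    · fin_cases i <;> simp [complementBasis, hmem, sub_mem, Submodule.smul_mem]
    · fin_cases i <;> simp [complementBasis, hu.gram_eq, gramU4]
  · rintro x ⟨hxL, hxw⟩
    obtain ⟨f, rfl⟩ := (Submodule.mem_span_range_iff_exists_fun ℤ).mp (hu.span_eq ▸ hxL)
    have hf : f 1 = -(k * f 0) := by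
      have : (f 1 : ℚ) + k * f 0 = 0 := by simpa [Fin.sum_univ_eight, hu.gram_eq, gramU4] using hxw
      linarith [(by exact_mod_cast this : f 1 + k * f 0 = 0)]
    have hx : ∑ i, f i • u i =
        ∑ i, ![f 2, f 3, f 4, f 5, f 6, f 7, f 0] i • complementBasis u k i := by
      simp only [Fin.sum_univ_eight, Fin.sum_univ_seven, complementBasis, hf, cons_val_zero,
        cons_val_one, cons_val]
      module
    rw [hx]
    exact Submodule.sum_mem _ fun i _ => Submodule.smul_mem _ _ (Submodule.subset_span ⟨i, rfl⟩)

end U4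

theorem stmt10_general {V : Type*} [AddCommGroup V] [Module ℚ V]
    (B : V →ₗ[ℚ] V →ₗ[ℚ] ℚ)
    (L : Submodule ℤ V)
    (b : Fin 8 → V) (hbL : Submodule.span ℤ (Set.range b) = L)
    (hGram : ∀ i j, B (b i) (b j) = gramU4 i j)
    (k m : ℤ) (hm : 1 ≤ m)
    (w : V) (hw : w ∈ L)
    (hwprim : ∀ x ∈ L, ∀ n : ℤ, w = n • x → n = 1 ∨ n = -1)
    (hww : B w w = 2 * (k : ℚ))
    (v : V) (hv : v = (m : ℚ) • w) :
    ∃ c : Fin 7 → V,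
      (∀ i, c i ∈ L ∧ B (c i) v = 0) ∧
      LinearIndependent ℚ c ∧
      Submodule.span ℤ (Set.range c)
        = L ⊓ Submodule.restrictScalars ℤ (LinearMap.ker (B.flip v)) ∧
      (∀ i j, B (c i) (c j) = gramU3neg2k k i j) := by
  obtain ⟨u, hu, rfl⟩ := U4.IsHyperbolicBasis.exists_eq_add_smul ⟨hbL, hGram⟩ hw hwprim hww
  have hspan : Submodule.span ℤ (Set.range (U4.complementBasis u k)) =
      L ⊓ (LinearMap.ker (B.flip v)).restrictScalars ℤ := by
    rw [hv, map_smul, LinearMap.ker_smul _ _ (by exact_mod_cast (by omega : m ≠ 0)),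
      hu.span_complementBasis]
  refine ⟨U4.complementBasis u k, fun i => ?_, U4.linearIndependent_complementBasis hu.gram_eq k,
    hspan, U4.gram_complementBasis hu.gram_eq k⟩
  have hi : U4.complementBasis u k i ∈ L ⊓ (LinearMap.ker (B.flip v)).restrictScalars ℤ :=
    hspan ▸ Submodule.subset_span ⟨i, rfl⟩
  exact ⟨hi.1, hi.2⟩

/-- Let `Λ̃` be an even unimodular lattice of signature `(4,4)`, hence
(by Milnor) isometric to `U^{⊕4}`: concretely, a full lattice `L` in a `ℚ`-quadratic
space with a `ℤ`-basis `b` whose Gram matrix is that of `U^{⊕4}`.  Let `w ∈ L` be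
primitive with `w² = 2k > 0`, let `m ≥ 1`, and set `v = m • w`.  Then the orthogonal
complement `v^⊥` of `v` in `L` is an even lattice of rank `7`, of signature `(3,4)`,
isometric to `U^{⊕3} ⊕ ⟨-2k⟩`: it admits a `ℤ`-basis `c` (seven `ℚ`-linearly independent
vectors of `L ∩ v^⊥` spanning it over `ℤ`) with Gram matrix that of `U^{⊕3} ⊕ ⟨-2k⟩`. -/
theorem stmt10 {V : Type*} [AddCommGroup V] [Module ℚ V] [FiniteDimensional ℚ V]
    (B : V →ₗ[ℚ] V →ₗ[ℚ] ℚ)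
    (hsymm : ∀ v w, B v w = B w v)
    (hnondeg : ∀ v, (∀ w, B v w = 0) → v = 0)
    (L : Submodule ℤ V)
    (b : Fin 8 → V) (hbL : Submodule.span ℤ (Set.range b) = L)
    (hbli : LinearIndependent ℚ b)
    (hbspan : Submodule.span ℚ (Set.range b) = ⊤)
    (hGram : ∀ i j, B (b i) (b j) = gramU4 i j)
    (k m : ℤ) (hk : 0 < k) (hm : 1 ≤ m)
    (w : V) (hw : w ∈ L)
    (hwprim : ∀ x ∈ L, ∀ n : ℤ, w = n • x → n = 1 ∨ n = -1)
    (hww : B w w = 2 * (k : ℚ))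
    (v : V) (hv : v = (m : ℚ) • w) :
    ∃ c : Fin 7 → V,
      (∀ i, c i ∈ L ∧ B (c i) v = 0) ∧
      LinearIndependent ℚ c ∧
      Submodule.span ℤ (Set.range c)
        = L ⊓ Submodule.restrictScalars ℤ (LinearMap.ker (B.flip v)) ∧
      (∀ i j, B (c i) (c j) = gramU3neg2k k i j) :=
  stmt10_general B L b hbL hGram k m hm w hw hwprim hww v hv
end

section
/- Let Λ be an even lattice of signature (p,q) with p > 1, and let Λ' ⊆ Λ be a nondegenerate sublattice of signature (p',q') with 1 ≤ p' and such that the induced embedding O(Λ') ↪ O(Λ) (extending isometries by the identity on (Λ')^⊥) is defined. Then an isometry g ∈ O(Λ') is orientation-preserving on Λ' if and only if its extension g ⊕ id is orientation-preserving on Λ; i.e., the orientation character of Λ restricts to the orientation character of Λ'. -/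
/-!
Diagonalising `B` on a subspace `W` and rescaling by `√|B (f k) (f k)|` writes `B` on `W` as
`P x ⬝ᵥ P y - N x ⬝ᵥ N y` for real coordinates `P x ∈ ℝ^r`, `r` the positive index of `W`.
A positive frame `u` of size `r` then has an invertible coordinate matrix `A u`, and
`det B(u, v)` has the sign of `det (A u) * det (A v)`, because `det (A uᵀ A v - t N uᵀ N v)`
cannot vanish for `t ∈ [0, 1]`. Hence the sign of `det B(u, g u)` does not depend on the maximal
frame `u`. For `V = W ⊕ W^⊥` with `g = id` on `W^⊥`, concatenating maximal frames of `W` and `W^⊥`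
gives a maximal frame of `V` whose pairing matrix is block triangular, the `W^⊥` block being a
positive definite Gram matrix.
-/

section Defs

variable {V : Type*} [AddCommGroup V] [Module ℚ V]

/-- `w` is a basis of a maximal positive-definite subspace of `W ≤ V` for the form `B`. -/
def IsMaxPos (B : V → V → ℚ) (W : Submodule ℚ V) {p : ℕ} (w : Fin p → V) : Prop :=
  (∀ i, w i ∈ W) ∧ LinearIndependent ℚ w ∧
    (∀ v ∈ Submodule.span ℚ (Set.range w), v ≠ 0 → 0 < B v v) ∧
    ∀ (q : ℕ) (u : Fin q → V), (∀ i, u i ∈ W) → LinearIndependent ℚ u →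
      (∀ v ∈ Submodule.span ℚ (Set.range u), v ≠ 0 → 0 < B v v) → q ≤ p

/-- `g` preserves the orientation of (the positive cone of) the quadratic space `(W, B)`:
for every basis `w` of a maximal positive-definite subspace of `W`, the pairing matrix
`(B (w i) (g (w j)))` has positive determinant. -/
def OriPres (B : V → V → ℚ) (W : Submodule ℚ V) (g : V → V) : Prop :=
  ∀ (p : ℕ) (w : Fin p → V), IsMaxPos B W w →
    0 < (Matrix.of fun i j => B (w i) (g (w j))).det


end Defs

open Matrix Submodule

section RealMatrix

variable {n m : Type*} [Fintype n] [Fintype m]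

lemma sq_dotProduct_le (u v : m → ℝ) : (u ⬝ᵥ v) ^ 2 ≤ (u ⬝ᵥ u) * (v ⬝ᵥ v) := by
  simpa [dotProduct, sq] using Finset.sum_mul_sq_le_sq_mul_sq Finset.univ u v

lemma mulVec_injective_of_dotProduct_lt {l : Type*} [Fintype l] {A : Matrix l n ℝ}
    {N : Matrix m n ℝ} (h : ∀ x, x ≠ 0 → N *ᵥ x ⬝ᵥ N *ᵥ x < A *ᵥ x ⬝ᵥ A *ᵥ x) :
    Function.Injective A.mulVec := by
  refine (injective_iff_map_eq_zero A.mulVecLin).mpr fun x hx => ?_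
  by_contra hx0
  have := h x hx0
  rw [show A *ᵥ x = 0 from hx, dotProduct_zero] at this
  exact (dotProduct_self_star_nonneg (N *ᵥ x)).not_gt this

lemma Matrix.ratCast_dotProduct_mulVec (M : Matrix n n ℚ) (y : n → ℚ) :
    ((y ⬝ᵥ M *ᵥ y : ℚ) : ℝ) = (fun i => (y i : ℝ)) ⬝ᵥ M.map (↑) *ᵥ fun i => (y i : ℝ) := by
  simp [dotProduct, mulVec]

variable [DecidableEq n]

theorem det_mul_det_mul_det_sub_pos {A A' : Matrix n n ℝ} {N N' : Matrix m n ℝ}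
    (hA : ∀ x, x ≠ 0 → N *ᵥ x ⬝ᵥ N *ᵥ x < A *ᵥ x ⬝ᵥ A *ᵥ x)
    (hA' : ∀ x, x ≠ 0 → N' *ᵥ x ⬝ᵥ N' *ᵥ x < A' *ᵥ x ⬝ᵥ A' *ᵥ x) :
    0 < A.det * A'.det * (Aᵀ * A' - Nᵀ * N').det := by
  set F : ℝ → ℝ := fun t => (Aᵀ * A' - t • (Nᵀ * N')).det
  have hF0 : F 0 = A.det * A'.det := by simp [F, det_mul]
  have hF1 : F 1 = (Aᵀ * A' - Nᵀ * N').det := by simp [F]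
  have hF_ne : ∀ t ∈ Set.Icc (0 : ℝ) 1, F t ≠ 0 := by
    intro t ht hFt
    obtain ⟨x, hx0, hx⟩ := exists_mulVec_eq_zero_iff.mpr hFt
    obtain ⟨w, hw⟩ := mulVec_surjective_iff_isUnit.mpr
      (mulVec_injective_iff_isUnit.mp (mulVec_injective_of_dotProduct_lt hA)) (A' *ᵥ x)
    have hw0 : w ≠ 0 := by
      rintro rfl
      exact hx0 (mulVec_injective_of_dotProduct_lt hA' (by rw [← hw, mulVec_zero, mulVec_zero]))
    -- pairing the kernel equation with `w` gives `|A w|² = t ⟨N w, N' x⟩`, against Cauchy–Schwarz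
    have hkey : A *ᵥ w ⬝ᵥ A *ᵥ w = t * (N *ᵥ w ⬝ᵥ N' *ᵥ x) := by
      have := congrArg (w ⬝ᵥ ·) hx
      simp only [sub_mulVec, smul_mulVec, ← mulVec_mulVec, dotProduct_sub, dotProduct_smul,
        dotProduct_zero, smul_eq_mul, sub_eq_zero] at this
      rwa [dotProduct_mulVec w Aᵀ, vecMul_transpose, dotProduct_mulVec w Nᵀ, vecMul_transpose,
        ← hw] at this
    have hNw := hA w hw0
    have hN'x := hA' x hx0
    rw [← hw] at hN'x
    have hb : 0 ≤ N *ᵥ w ⬝ᵥ N *ᵥ w := dotProduct_self_star_nonneg _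
    have hc : 0 ≤ N' *ᵥ x ⬝ᵥ N' *ᵥ x := dotProduct_self_star_nonneg _
    have hcs := sq_dotProduct_le (N *ᵥ w) (N' *ᵥ x)
    have ht2 : t ^ 2 ≤ 1 := pow_le_one₀ ht.1 ht.2
    nlinarith [mul_lt_mul'' hNw hN'x hb hc, sq_nonneg (N *ᵥ w ⬝ᵥ N' *ᵥ x)]
  rw [← hF0, ← hF1]
  by_contra hle
  have hF0_ne := hF_ne 0 (by simp)
  obtain ⟨t, ht, hFt⟩ : (0 : ℝ) ∈ F '' Set.uIcc 0 1 := by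
    refine intermediate_value_uIcc (by fun_prop) ?_
    rw [Set.mem_uIcc]
    rcases hF0_ne.lt_or_gt with h | h
    · exact Or.inl ⟨h.le, by nlinarith⟩
    · exact Or.inr ⟨by nlinarith, h.le⟩
  exact hF_ne t (by simpa using ht) hFt

lemma Matrix.det_map_ratCast (M : Matrix n n ℚ) : (M.map ((↑) : ℚ → ℝ)).det = M.det :=
  ((Rat.castHom ℝ).map_det M).symm

theorem Matrix.PosDef.map_ratCast {M : Matrix n n ℚ} (hM : M.PosDef) :
    (M.map ((↑) : ℚ → ℝ)).PosDef := by
  have herm : (M.map ((↑) : ℚ → ℝ)).IsHermitian := hM.isHermitian.map _ fun _ => rfl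
  -- nonnegativity passes to the closure of `ℚⁿ`; invertibility upgrades it to definiteness
  have hnonneg : ∀ x : n → ℝ, 0 ≤ x ⬝ᵥ M.map (↑) *ᵥ x := by
    have hclosed : IsClosed {x : n → ℝ | 0 ≤ x ⬝ᵥ M.map (↑) *ᵥ x} :=
      isClosed_le continuous_const (by fun_prop)
    have hdense : DenseRange (Pi.map fun _ : n => ((↑) : ℚ → ℝ)) :=
      DenseRange.piMap fun _ => Rat.denseRange_cast
    refine fun x => hdense.induction_on x hclosed fun y => ?_
    have := hM.posSemidef.dotProduct_mulVec_nonneg y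
    show 0 ≤ (fun i => (y i : ℝ)) ⬝ᵥ M.map (↑) *ᵥ fun i => (y i : ℝ)
    rw [← ratCast_dotProduct_mulVec]
    exact_mod_cast this
  refine (PosSemidef.of_dotProduct_mulVec_nonneg herm hnonneg).posDef_iff_isUnit.mpr ?_
  rw [isUnit_iff_isUnit_det, det_map_ratCast, isUnit_iff_ne_zero, Rat.cast_ne_zero,
    ← isUnit_iff_ne_zero, ← isUnit_iff_isUnit_det]
  exact hM.isUnit

theorem Matrix.PosDef.det_pos_of_rat {M : Matrix n n ℚ} (hM : M.PosDef) : 0 < M.det := by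
  exact_mod_cast det_map_ratCast M ▸ hM.map_ratCast.det_pos

end RealMatrix


section QuadraticSpace

variable {V : Type*} [AddCommGroup V] [Module ℚ V] (B : V →ₗ[ℚ] V →ₗ[ℚ] ℚ)

def gramMatrix {ι κ : Type*} (u : ι → V) (v : κ → V) : Matrix ι κ ℚ :=
  Matrix.of fun i j => B (u i) (v j)

/-- `u` is a basis of a positive-definite subspace of `W`. -/
def PosFrame {ι : Type*} (W : Submodule ℚ V) (u : ι → V) : Prop :=
  (∀ i, u i ∈ W) ∧ (gramMatrix B u u).PosDef

variable {B} {ι κ : Type*} [Fintype ι] [Fintype κ]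

lemma dotProduct_gramMatrix_mulVec (u : ι → V) (v : κ → V) (x : ι → ℚ) (y : κ → ℚ) :
    x ⬝ᵥ gramMatrix B u v *ᵥ y = B (∑ i, x i • u i) (∑ j, y j • v j) := by
  simp only [gramMatrix, dotProduct, mulVec, of_apply, map_sum, map_smul, LinearMap.sum_apply,
    LinearMap.smul_apply, smul_eq_mul, Finset.mul_sum]
  rw [Finset.sum_comm]
  exact Finset.sum_congr rfl fun _ _ => Finset.sum_congr rfl fun _ _ => by ring

lemma posDef_gramMatrix_iff (hsymm : ∀ v w, B v w = B w v) (u : ι → V) :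
    (gramMatrix B u u).PosDef ↔
      LinearIndependent ℚ u ∧ ∀ v ∈ span ℚ (Set.range u), v ≠ 0 → 0 < B v v := by
  have herm : (gramMatrix B u u).IsHermitian := by ext i j; exact hsymm _ _
  simp only [posDef_iff_dotProduct_mulVec, herm, true_and, star_trivial,
    dotProduct_gramMatrix_mulVec, Fintype.linearIndependent_iff, mem_span_range_iff_exists_fun]
  refine ⟨fun h => ⟨fun x hx => ?_, ?_⟩, fun ⟨hli, hpos⟩ x hx => ?_⟩
  · by_contra! hx0
    simpa [hx] using h (Function.ne_iff.mpr hx0)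
  · rintro _ ⟨x, rfl⟩ hv
    exact h fun hx => hv (by simp [hx])
  · refine hpos _ ⟨x, rfl⟩ fun hv => hx (funext (hli x hv))

end QuadraticSpace

section Frames

variable {V : Type*} [AddCommGroup V] [Module ℚ V] {B : V →ₗ[ℚ] V →ₗ[ℚ] ℚ} {W : Submodule ℚ V}

lemma isMaxPos_iff (hsymm : ∀ v w, B v w = B w v) {p : ℕ} (w : Fin p → V) :
    IsMaxPos (fun x y => B x y) W w ↔
      PosFrame B W w ∧ ∀ q (u : Fin q → V), PosFrame B W u → q ≤ p := by
  simp only [IsMaxPos, PosFrame, posDef_gramMatrix_iff hsymm, and_imp, and_assoc]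

lemma IsMaxPos.length_eq {B : V → V → ℚ} {p q : ℕ} {u : Fin p → V} {w : Fin q → V}
    (hu : IsMaxPos B W u) (hw : IsMaxPos B W w) : p = q :=
  le_antisymm (hw.2.2.2 p u hu.1 hu.2.1 hu.2.2.1) (hu.2.2.2 q w hw.1 hw.2.1 hw.2.2.1)

lemma PosFrame.comp_isometry {ι : Type*} {u : ι → V} (hu : PosFrame B W u) {g : V → V}
    (hgB : ∀ v w, B (g v) (g w) = B v w) (hgW : ∀ x ∈ W, g x ∈ W) : PosFrame B W (g ∘ u) := by
  refine ⟨fun i => hgW _ (hu.1 i), ?_⟩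
  convert hu.2 using 1
  ext i j
  exact hgB _ _

end Frames

section RealModel

variable {V : Type*} [AddCommGroup V] [Module ℚ V] {B : V →ₗ[ℚ] V →ₗ[ℚ] ℚ} {W : Submodule ℚ V}
  {ι κ μ : Type*} [Fintype κ] [Fintype μ] {P : V → κ → ℝ} {N : V → μ → ℝ}

def coordMatrix (P : V → κ → ℝ) (u : ι → V) : Matrix κ ι ℝ :=
  Matrix.of fun k i => P (u i) k

lemma gramMatrix_map_ratCast {ι' : Type*} {u : ι → V} {v : ι' → V}
    (hPN : ∀ x ∈ W, ∀ y ∈ W, (B x y : ℝ) = P x ⬝ᵥ P y - N x ⬝ᵥ N y)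
    (hu : ∀ i, u i ∈ W) (hv : ∀ j, v j ∈ W) :
    (gramMatrix B u v).map (↑) =
      (coordMatrix P u)ᵀ * coordMatrix P v - (coordMatrix N u)ᵀ * coordMatrix N v := by
  ext i j
  simp [gramMatrix, coordMatrix, mul_apply, hPN _ (hu i) _ (hv j), dotProduct]

lemma PosFrame.dotProduct_lt [Fintype ι] {u : ι → V} (hu : PosFrame B W u)
    (hPN : ∀ x ∈ W, ∀ y ∈ W, (B x y : ℝ) = P x ⬝ᵥ P y - N x ⬝ᵥ N y) (x : ι → ℝ) (hx : x ≠ 0) :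
    coordMatrix N u *ᵥ x ⬝ᵥ coordMatrix N u *ᵥ x <
      coordMatrix P u *ᵥ x ⬝ᵥ coordMatrix P u *ᵥ x := by
  classical
  have := hu.2.map_ratCast.dotProduct_mulVec_pos hx
  rw [gramMatrix_map_ratCast hPN hu.1 hu.1, star_trivial, sub_mulVec, dotProduct_sub,
    ← mulVec_mulVec, ← mulVec_mulVec, dotProduct_mulVec, vecMul_transpose,
    dotProduct_mulVec x (coordMatrix N u)ᵀ, vecMul_transpose] at this
  linarith

lemma PosFrame.card_le [Fintype ι] {u : ι → V} (hu : PosFrame B W u)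
    (hPN : ∀ x ∈ W, ∀ y ∈ W, (B x y : ℝ) = P x ⬝ᵥ P y - N x ⬝ᵥ N y) :
    Fintype.card ι ≤ Fintype.card κ := by
  simpa using LinearMap.finrank_le_finrank_of_injective (f := (coordMatrix P u).mulVecLin)
    (mulVec_injective_of_dotProduct_lt (hu.dotProduct_lt hPN))

lemma PosFrame.det_sign [DecidableEq κ] {u v : κ → V} (hu : PosFrame B W u)
    (hv : PosFrame B W v) (hPN : ∀ x ∈ W, ∀ y ∈ W, (B x y : ℝ) = P x ⬝ᵥ P y - N x ⬝ᵥ N y) :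
    0 < (coordMatrix P u).det * (coordMatrix P v).det * ((gramMatrix B u v).det : ℝ) := by
  rw [← det_map_ratCast, gramMatrix_map_ratCast hPN hu.1 hv.1]
  exact det_mul_det_mul_det_sub_pos (hu.dotProduct_lt hPN) (hv.dotProduct_lt hPN)

end RealModel

section OrthogonalFamily

variable {V : Type*} [AddCommGroup V] [Module ℚ V] {B : V →ₗ[ℚ] V →ₗ[ℚ] ℚ}

lemma exists_orthogonal_family [FiniteDimensional ℚ V] (hsymm : ∀ v w, B v w = B w v)
    (W : Submodule ℚ V) :
    ∃ (n : ℕ) (f : Fin n → V),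
      span ℚ (Set.range f) = W ∧ Pairwise fun k l => B (f k) (f l) = 0 := by
  obtain ⟨b, hb⟩ := LinearMap.BilinForm.exists_orthogonal_basis
    (B := LinearMap.BilinForm.restrict B W) ⟨fun x y => hsymm _ _⟩
  refine ⟨_, W.subtype ∘ b, ?_, fun k l hkl => hb hkl⟩
  rw [Set.range_comp, span_image, b.span_eq, map_subtype_top]

variable {ι : Type*} {W : Submodule ℚ V} {f : ι → V}

lemma gramMatrix_eq_diagonal [DecidableEq ι] (horth : Pairwise fun k l => B (f k) (f l) = 0) :
    gramMatrix B f f = diagonal fun k => B (f k) (f k) := by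
  ext k l
  rcases eq_or_ne k l with rfl | hkl
  · simp [gramMatrix]
  · simp [gramMatrix, horth hkl, hkl]

lemma apply_sum_smul_of_orthogonal [Fintype ι] (horth : Pairwise fun k l => B (f k) (f l) = 0)
    (a b : ι → ℚ) : B (∑ k, a k • f k) (∑ k, b k • f k) = ∑ k, B (f k) (f k) * a k * b k := by
  classical
  rw [← dotProduct_gramMatrix_mulVec, gramMatrix_eq_diagonal horth]
  simp only [dotProduct, mulVec_diagonal]
  exact Finset.sum_congr rfl fun _ _ => by ring

lemma sum_mul_mul_eq_sub_sum [Fintype ι] (d : ι → ℚ) (a b : ι → ℝ) :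
    ∑ k, (d k : ℝ) * a k * b k =
      ∑ k : {k // 0 < d k}, √(d k : ℝ) * a k * (√(d k : ℝ) * b k) -
        ∑ k : {k // ¬ 0 < d k}, √(-d k : ℝ) * a k * (√(-d k : ℝ) * b k) := by
  rw [← Fintype.sum_subtype_add_sum_subtype (fun k => 0 < d k), sub_eq_add_neg,
    ← Finset.sum_neg_distrib]
  congr 1 <;> refine Finset.sum_congr rfl fun k _ => ?_
  · have := Real.mul_self_sqrt (Rat.cast_nonneg.mpr k.2.le)
    linear_combination (-(a k * b k)) * this
  · have := Real.mul_self_sqrt (neg_nonneg.mpr (Rat.cast_nonpos.mpr (not_lt.mp k.2)))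
    linear_combination (a k * b k) * this

theorem exists_dotProduct_sub_dotProduct_of_orthogonal [Fintype ι] (hf : span ℚ (Set.range f) = W)
    (horth : Pairwise fun k l => B (f k) (f l) = 0) {r : ℕ}
    (hr : Fintype.card {k // 0 < B (f k) (f k)} = r) :
    ∃ (P : V → Fin r → ℝ) (N : V → {k // ¬ 0 < B (f k) (f k)} → ℝ),
      ∀ x ∈ W, ∀ y ∈ W, (B x y : ℝ) = P x ⬝ᵥ P y - N x ⬝ᵥ N y := by
  have hcoord : ∀ x ∈ W, ∃ c : ι → ℚ, ∑ k, c k • f k = x := fun x hx =>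
    (mem_span_range_iff_exists_fun ℚ).mp (hf ▸ hx)
  choose! c hc using hcoord
  let e := (Fintype.equivFinOfCardEq hr).symm
  refine ⟨fun x i => √(B (f (e i)) (f (e i)) : ℝ) * c x (e i),
    fun x k => √(-B (f k) (f k) : ℝ) * c x k, fun x hx y hy => ?_⟩
  have := apply_sum_smul_of_orthogonal horth (c x) (c y)
  rw [hc x hx, hc y hy] at this
  rw [this]
  push_cast
  rw [sum_mul_mul_eq_sub_sum]
  congr 1
  exact (e.sum_comp fun k => √(B (f k) (f k) : ℝ) * c x k * (√(B (f k) (f k) : ℝ) * c y k)).symm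

end OrthogonalFamily

section MaximalFrames

variable {V : Type*} [AddCommGroup V] [Module ℚ V] {B : V →ₗ[ℚ] V →ₗ[ℚ] ℚ}
  {ι : Type*} [Fintype ι] {W : Submodule ℚ V} {f : ι → V}

lemma PosFrame.card_le_of_orthogonal {κ : Type*} [Fintype κ] {u : κ → V} (hu : PosFrame B W u)
    (hf : span ℚ (Set.range f) = W) (horth : Pairwise fun k l => B (f k) (f l) = 0) :
    Fintype.card κ ≤ Fintype.card {k // 0 < B (f k) (f k)} := by
  obtain ⟨P, N, hPN⟩ := exists_dotProduct_sub_dotProduct_of_orthogonal hf horth rfl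
  simpa using hu.card_le hPN

lemma exists_posFrame_of_orthogonal (hf : span ℚ (Set.range f) = W)
    (horth : Pairwise fun k l => B (f k) (f l) = 0) {r : ℕ}
    (hr : Fintype.card {k // 0 < B (f k) (f k)} = r) : ∃ w : Fin r → V, PosFrame B W w := by
  classical
  let e := (Fintype.equivFinOfCardEq hr).symm
  refine ⟨f ∘ Subtype.val ∘ e, fun i => hf ▸ subset_span ⟨_, rfl⟩, ?_⟩
  change ((gramMatrix B f f).submatrix (Subtype.val ∘ e) (Subtype.val ∘ e)).PosDef
  rw [gramMatrix_eq_diagonal horth,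
    submatrix_diagonal _ _ (Subtype.val_injective.comp e.injective), posDef_diagonal_iff]
  exact fun i => (e i).2

theorem exists_isMaxPos_of_orthogonal (hsymm : ∀ v w, B v w = B w v)
    (hf : span ℚ (Set.range f) = W) (horth : Pairwise fun k l => B (f k) (f l) = 0) {r : ℕ}
    (hr : Fintype.card {k // 0 < B (f k) (f k)} = r) :
    ∃ w : Fin r → V, IsMaxPos (fun x y => B x y) W w := by
  obtain ⟨w, hw⟩ := exists_posFrame_of_orthogonal hf horth hr
  refine ⟨w, (isMaxPos_iff hsymm w).mpr ⟨hw, fun q u hu => ?_⟩⟩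
  simpa [hr] using hu.card_le_of_orthogonal hf horth

theorem exists_sign_of_orthogonal (hf : span ℚ (Set.range f) = W)
    (horth : Pairwise fun k l => B (f k) (f l) = 0) {r : ℕ}
    (hr : Fintype.card {k // 0 < B (f k) (f k)} = r) :
    ∃ ε : (Fin r → V) → ℝ, ∀ u v, PosFrame B W u → PosFrame B W v →
      0 < ε u * ε v * ((gramMatrix B u v).det : ℝ) := by
  obtain ⟨P, N, hPN⟩ := exists_dotProduct_sub_dotProduct_of_orthogonal hf horth hr
  exact ⟨fun u => (coordMatrix P u).det, fun u v hu hv => hu.det_sign hv hPN⟩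

end MaximalFrames

section OrthogonalSum

variable {V : Type*} [AddCommGroup V] [Module ℚ V] {B : V →ₗ[ℚ] V →ₗ[ℚ] ℚ}
  {W₁ W₂ : Submodule ℚ V}

lemma gramMatrix_sum_elim {ι₁ ι₂ κ₁ κ₂ : Type*} (u₁ : ι₁ → V) (u₂ : ι₂ → V) (v₁ : κ₁ → V)
    (v₂ : κ₂ → V) :
    gramMatrix B (Sum.elim u₁ u₂) (Sum.elim v₁ v₂) =
      fromBlocks (gramMatrix B u₁ v₁) (gramMatrix B u₁ v₂) (gramMatrix B u₂ v₁)
        (gramMatrix B u₂ v₂) := by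
  ext (i | i) (j | j) <;> rfl

lemma Matrix.PosDef.fromBlocks_zero {m n R : Type*} [Fintype m] [Fintype n] [CommRing R]
    [PartialOrder R] [StarRing R] [StarOrderedRing R] {A : Matrix m m R} {D : Matrix n n R}
    (hA : A.PosDef) (hD : D.PosDef) : (fromBlocks A 0 0 D).PosDef := by
  refine .of_dotProduct_mulVec_pos (hA.isHermitian.fromBlocks (by simp) hD.isHermitian)
    fun x hx => ?_
  have hstar : star x = Sum.elim (star (x ∘ Sum.inl)) (star (x ∘ Sum.inr)) := by
    ext (i | i) <;> rfl
  rw [hstar, ← Sum.elim_comp_inl_inr x, fromBlocks_mulVec]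
  simp only [zero_mulVec, add_zero, zero_add, Sum.elim_comp_inl, Sum.elim_comp_inr,
    sumElim_dotProduct_sumElim]
  by_cases h : x ∘ Sum.inl = 0
  · have h' : x ∘ Sum.inr ≠ 0 := fun h' =>
      hx (by ext (i | i); exacts [congrFun h i, congrFun h' i])
    exact add_pos_of_nonneg_of_pos (hA.posSemidef.dotProduct_mulVec_nonneg _)
      (hD.dotProduct_mulVec_pos h')
  · exact add_pos_of_pos_of_nonneg (hA.dotProduct_mulVec_pos h)
      (hD.posSemidef.dotProduct_mulVec_nonneg _)

lemma PosFrame.sum_elim (hsymm : ∀ v w, B v w = B w v) (hperp : ∀ x ∈ W₁, ∀ y ∈ W₂, B x y = 0)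
    {ι₁ ι₂ : Type*} [Fintype ι₁] [Fintype ι₂] {u₁ : ι₁ → V} {u₂ : ι₂ → V}
    (hu₁ : PosFrame B W₁ u₁) (hu₂ : PosFrame B W₂ u₂) :
    PosFrame B (W₁ ⊔ W₂) (Sum.elim u₁ u₂) := by
  refine ⟨fun i => i.rec (fun i => mem_sup_left (hu₁.1 i)) (fun i => mem_sup_right (hu₂.1 i)), ?_⟩
  have h₁₂ : gramMatrix B u₁ u₂ = 0 := by ext i j; exact hperp _ (hu₁.1 i) _ (hu₂.1 j)
  have h₂₁ : gramMatrix B u₂ u₁ = 0 := by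
    ext i j; exact (hsymm _ _).trans (hperp _ (hu₁.1 j) _ (hu₂.1 i))
  rw [gramMatrix_sum_elim, h₁₂, h₂₁]
  exact hu₁.2.fromBlocks_zero hu₂.2

lemma PosFrame.comp_equiv {ι κ : Type*} {W : Submodule ℚ V} {u : ι → V} (hu : PosFrame B W u)
    (e : κ ≃ ι) : PosFrame B W (u ∘ e) :=
  ⟨fun i => hu.1 (e i), hu.2.submatrix e.injective⟩

end OrthogonalSum

section Orientation

variable {V : Type*} [AddCommGroup V] [Module ℚ V]
  {B : V →ₗ[ℚ] V →ₗ[ℚ] ℚ} {W W₁ W₂ : Submodule ℚ V}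

theorem oriPres_iff_of_isMaxPos (hsymm : ∀ v w, B v w = B w v) {g : V → V}
    (hgB : ∀ v w, B (g v) (g w) = B v w) (hgW : ∀ x ∈ W, g x ∈ W) {r : ℕ} {w₀ : Fin r → V}
    (hw₀ : IsMaxPos (fun x y => B x y) W w₀) {ε : (Fin r → V) → ℝ}
    (hε : ∀ u v, PosFrame B W u → PosFrame B W v →
      0 < ε u * ε v * ((gramMatrix B u v).det : ℝ)) :
    OriPres (fun x y => B x y) W g ↔ 0 < (gramMatrix B w₀ (g ∘ w₀)).det := by
  refine ⟨fun h => h r w₀ hw₀, fun h p u hu => ?_⟩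
  obtain rfl := hu.length_eq hw₀
  have hu' := ((isMaxPos_iff hsymm u).mp hu).1
  have hw₀' := ((isMaxPos_iff hsymm w₀).mp hw₀).1
  have h₁ := hε _ _ hu' (hu'.comp_isometry hgB hgW)
  have h₂ := hε _ _ hw₀' (hw₀'.comp_isometry hgB hgW)
  have h₃ := hε _ _ (hu'.comp_isometry hgB hgW) (hw₀'.comp_isometry hgB hgW)
  have h₄ := hε _ _ hu' hw₀'
  have hg : gramMatrix B (g ∘ u) (g ∘ w₀) = gramMatrix B u w₀ := by ext; exact hgB _ _
  rw [hg] at h₃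
  -- the four signs around `u → g u → g w₀ → w₀ → u` multiply to a square
  have hprod : 0 < ((gramMatrix B u (g ∘ u)).det : ℝ) * ((gramMatrix B w₀ (g ∘ w₀)).det : ℝ) *
      (ε u * ε (g ∘ u) * ε w₀ * ε (g ∘ w₀) * ((gramMatrix B u w₀).det : ℝ)) ^ 2 := by
    exact (mul_pos (mul_pos h₁ h₂) (mul_pos h₃ h₄)).trans_eq (by ring)
  have := pos_of_mul_pos_left hprod (sq_nonneg _)
  exact_mod_cast (mul_pos_iff_of_pos_right (by exact_mod_cast h)).mp this

theorem exists_isMaxPos_and_sign [FiniteDimensional ℚ V] (hsymm : ∀ v w, B v w = B w v)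
    (W : Submodule ℚ V) :
    ∃ (r : ℕ) (w : Fin r → V), IsMaxPos (fun x y => B x y) W w ∧
      ∃ ε : (Fin r → V) → ℝ, ∀ u v, PosFrame B W u → PosFrame B W v →
        0 < ε u * ε v * ((gramMatrix B u v).det : ℝ) := by
  obtain ⟨n, f, hf, horth⟩ := exists_orthogonal_family hsymm W
  obtain ⟨w, hw⟩ := exists_isMaxPos_of_orthogonal hsymm hf horth rfl
  exact ⟨_, w, hw, exists_sign_of_orthogonal hf horth rfl⟩

theorem IsMaxPos.append [FiniteDimensional ℚ V] (hsymm : ∀ v w, B v w = B w v)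
    (hperp : ∀ x ∈ W₁, ∀ y ∈ W₂, B x y = 0)
    {p₁ p₂ : ℕ} {w₁ : Fin p₁ → V} {w₂ : Fin p₂ → V} (hw₁ : IsMaxPos (fun x y => B x y) W₁ w₁)
    (hw₂ : IsMaxPos (fun x y => B x y) W₂ w₂) :
    IsMaxPos (fun x y => B x y) (W₁ ⊔ W₂) (Sum.elim w₁ w₂ ∘ finSumFinEquiv.symm) := by
  obtain ⟨n₁, f₁, hf₁, horth₁⟩ := exists_orthogonal_family hsymm W₁
  obtain ⟨n₂, f₂, hf₂, horth₂⟩ := exists_orthogonal_family hsymm W₂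
  obtain ⟨w₁', hw₁'⟩ := exists_isMaxPos_of_orthogonal hsymm hf₁ horth₁ rfl
  obtain ⟨w₂', hw₂'⟩ := exists_isMaxPos_of_orthogonal hsymm hf₂ horth₂ rfl
  have hf : span ℚ (Set.range (Sum.elim f₁ f₂)) = W₁ ⊔ W₂ := by
    rw [Set.Sum.elim_range, span_union, hf₁, hf₂]
  have hmem₁ : ∀ k, f₁ k ∈ W₁ := fun k => hf₁ ▸ subset_span ⟨k, rfl⟩
  have hmem₂ : ∀ k, f₂ k ∈ W₂ := fun k => hf₂ ▸ subset_span ⟨k, rfl⟩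
  have horth : Pairwise fun k l => B (Sum.elim f₁ f₂ k) (Sum.elim f₁ f₂ l) = 0 := by
    rintro (k | k) (l | l) hkl
    · exact horth₁ fun h => hkl (congrArg _ h)
    · exact hperp _ (hmem₁ k) _ (hmem₂ l)
    · exact (hsymm _ _).trans (hperp _ (hmem₁ l) _ (hmem₂ k))
    · exact horth₂ fun h => hkl (congrArg _ h)
  have hcard : Fintype.card {k // 0 < B (Sum.elim f₁ f₂ k) (Sum.elim f₁ f₂ k)} = p₁ + p₂ := by
    rw [Fintype.card_congr Equiv.subtypeSum, Fintype.card_sum, hw₁.length_eq hw₁',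
      hw₂.length_eq hw₂']
    rfl
  rw [isMaxPos_iff hsymm] at hw₁ hw₂ ⊢
  refine ⟨(hw₁.1.sum_elim hsymm hperp hw₂.1).comp_equiv _, fun q u hu => ?_⟩
  simpa [hcard] using hu.card_le_of_orthogonal hf horth

lemma det_gramMatrix_append (hperp : ∀ x ∈ W₁, ∀ y ∈ W₂, B x y = 0) {p₁ p₂ : ℕ}
    {w₁ : Fin p₁ → V} {w₂ : Fin p₂ → V} (hw₁ : ∀ i, w₁ i ∈ W₁) (hw₂ : ∀ i, w₂ i ∈ W₂)
    {g : V → V} (hgW₂ : ∀ x ∈ W₂, g x = x) :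
    (gramMatrix B (Sum.elim w₁ w₂ ∘ finSumFinEquiv.symm)
        (g ∘ Sum.elim w₁ w₂ ∘ finSumFinEquiv.symm)).det =
      (gramMatrix B w₁ (g ∘ w₁)).det * (gramMatrix B w₂ w₂).det := by
  have hg : g ∘ Sum.elim w₁ w₂ = Sum.elim (g ∘ w₁) w₂ := by
    rw [Sum.comp_elim]
    exact congrArg _ (funext fun i => hgW₂ _ (hw₂ i))
  have h₁₂ : gramMatrix B w₁ w₂ = 0 := by ext i j; exact hperp _ (hw₁ i) _ (hw₂ j)
  change ((gramMatrix B (Sum.elim w₁ w₂) (g ∘ Sum.elim w₁ w₂)).submatrix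
    finSumFinEquiv.symm finSumFinEquiv.symm).det = _
  rw [det_submatrix_equiv_self, hg, gramMatrix_sum_elim, h₁₂, det_fromBlocks_zero₁₂]

theorem oriPres_sup_iff [FiniteDimensional ℚ V] (hsymm : ∀ v w, B v w = B w v)
    (hperp : ∀ x ∈ W₁, ∀ y ∈ W₂, B x y = 0)
    {g : V →ₗ[ℚ] V} (hgB : ∀ v w, B (g v) (g w) = B v w) (hgW₁ : ∀ x ∈ W₁, g x ∈ W₁)
    (hgW₂ : ∀ x ∈ W₂, g x = x) :
    OriPres (fun x y => B x y) (W₁ ⊔ W₂) g ↔ OriPres (fun x y => B x y) W₁ g := by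
  have hgW : ∀ x ∈ W₁ ⊔ W₂, g x ∈ W₁ ⊔ W₂ := by
    intro x hx
    obtain ⟨a, ha, b, hb, rfl⟩ := mem_sup.mp hx
    rw [map_add, hgW₂ b hb]
    exact add_mem_sup (hgW₁ a ha) hb
  obtain ⟨r, w, hw, ε, hε⟩ := exists_isMaxPos_and_sign hsymm (W₁ ⊔ W₂)
  obtain ⟨r₁, w₁, hw₁, ε₁, hε₁⟩ := exists_isMaxPos_and_sign hsymm W₁
  obtain ⟨r₂, w₂, hw₂, -⟩ := exists_isMaxPos_and_sign hsymm W₂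
  have hw₁₂ := hw₁.append hsymm hperp hw₂
  obtain rfl := hw₁₂.length_eq hw
  have hw₁' := ((isMaxPos_iff hsymm w₁).mp hw₁).1
  have hw₂' := ((isMaxPos_iff hsymm w₂).mp hw₂).1
  rw [oriPres_iff_of_isMaxPos hsymm hgB hgW hw₁₂ hε,
    oriPres_iff_of_isMaxPos hsymm hgB hgW₁ hw₁ hε₁, det_gramMatrix_append hperp hw₁'.1 hw₂'.1 hgW₂]
  exact mul_pos_iff_of_pos_right hw₂'.2.det_pos_of_rat

end Orientation

theorem stmt16_general {V : Type*} [AddCommGroup V] [Module ℚ V] [FiniteDimensional ℚ V]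
    (B : V →ₗ[ℚ] V →ₗ[ℚ] ℚ)
    (hsymm : ∀ v w, B v w = B w v)
    (Λ' : Submodule ℤ V)
    -- `Λ'` is nondegenerate
    (hnondeg' : ∀ x ∈ Submodule.span ℚ (Λ' : Set V), (∀ y ∈ Λ', B x y = 0) → x = 0)
    (g : V ≃ₗ[ℚ] V)
    (hgB : ∀ v w, B (g v) (g w) = B v w)
    (hgΛ' : Submodule.map (g.toLinearMap.restrictScalars ℤ) Λ' = Λ')
    (hgid : ∀ x, (∀ y ∈ Λ', B x y = 0) → g x = x) :
    OriPres (fun v w => B v w) ⊤ g ↔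
      OriPres (fun v w => B v w) (Submodule.span ℚ (Λ' : Set V)) g := by
  set W := span ℚ (Λ' : Set V)
  have hnd : (LinearMap.BilinForm.restrict B W).Nondegenerate := by
    refine ⟨fun x h => ?_, fun x h => ?_⟩ <;> refine Subtype.ext (hnondeg' x x.2 fun y hy => ?_)
    · exact h ⟨y, subset_span hy⟩
    · exact (hsymm _ _).trans (h ⟨y, subset_span hy⟩)
  have hcompl := LinearMap.BilinForm.isCompl_orthogonal_of_restrict_nondegenerate
    (fun x y h => (hsymm y x).trans h) hnd
  have hperp : ∀ x ∈ W, ∀ y ∈ LinearMap.BilinForm.orthogonal B W, B x y = 0 :=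
    fun x hx y hy => LinearMap.BilinForm.mem_orthogonal_iff.mp hy x hx
  have hgW : W ≤ W.comap g.toLinearMap :=
    span_le.mpr fun y hy => subset_span (hgΛ' ▸ mem_map_of_mem hy)
  have hgid' : ∀ x ∈ LinearMap.BilinForm.orthogonal B W, g x = x :=
    fun x hx => hgid x fun y hy => (hsymm _ _).trans (hperp y (subset_span hy) x hx)
  rw [← hcompl.sup_eq_top]
  exact oriPres_sup_iff hsymm hperp (g := g.toLinearMap) hgB hgW hgid'

/-- Let `Λ` be an even lattice of signature `(p,q)` with `p > 1` (a full
even lattice in a `ℚ`-quadratic space admitting a 2-dimensional positive-definite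
subspace), and let `Λ' ⊆ Λ` be a nondegenerate sublattice of signature `(p',q')` with
`p' ≥ 1` such that the embedding `O(Λ') ↪ O(Λ)` extending isometries by the identity on
`(Λ')^⊥` is defined.  Then an isometry `g` of `Λ'` (here: an isometry of the ambient space
preserving `Λ` and `Λ'` and equal to the identity on the orthogonal complement of `Λ'`) is
orientation preserving on `Λ'` if and only if its extension is orientation preserving on
`Λ`: the orientation character of `Λ` restricts to that of `Λ'`. -/
theorem stmt16 {V : Type*} [AddCommGroup V] [Module ℚ V] [FiniteDimensional ℚ V]
    (B : V →ₗ[ℚ] V →ₗ[ℚ] ℚ)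
    (hsymm : ∀ v w, B v w = B w v)
    (hnondeg : ∀ v, (∀ w, B v w = 0) → v = 0)
    (Λ Λ' : Submodule ℤ V) (hle : Λ' ≤ Λ)
    (hfull : Submodule.span ℚ (Λ : Set V) = ⊤)
    (hint : ∀ v ∈ Λ, ∀ w ∈ Λ, ∃ n : ℤ, B v w = (n : ℚ))
    (heven : ∀ v ∈ Λ, ∃ n : ℤ, B v v = 2 * (n : ℚ))
    -- `p > 1`: there is a 2-dimensional positive-definite subspace
    (hp : ∃ w : Fin 2 → V, LinearIndependent ℚ w ∧
      ∀ v ∈ Submodule.span ℚ (Set.range w), v ≠ 0 → 0 < B v v)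
    -- `p' ≥ 1`: `Λ' ⊗ ℝ` contains a positive vector
    (hp' : ∃ v ∈ Submodule.span ℚ (Λ' : Set V), 0 < B v v)
    -- `Λ'` is nondegenerate
    (hnondeg' : ∀ x ∈ Submodule.span ℚ (Λ' : Set V), (∀ y ∈ Λ', B x y = 0) → x = 0)
    (g : V ≃ₗ[ℚ] V)
    (hgB : ∀ v w, B (g v) (g w) = B v w)
    (hgΛ' : Submodule.map (g.toLinearMap.restrictScalars ℤ) Λ' = Λ')
    (hgΛ : Submodule.map (g.toLinearMap.restrictScalars ℤ) Λ = Λ)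
    (hgid : ∀ x, (∀ y ∈ Λ', B x y = 0) → g x = x) :
    OriPres (fun v w => B v w) ⊤ g ↔
      OriPres (fun v w => B v w) (Submodule.span ℚ (Λ' : Set V)) g :=
  stmt16_general B hsymm Λ' hnondeg' g hgB hgΛ' hgid
end
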